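/- arXiv:quant-ph/0410052 — 7 statements merged into one kernel-verified Lean document; each statement's English description precedes it below -/
import Mathlib

section
/- (Uhlmann's theorem) Let $\rho$ and $\sigma$ be $n \times n$ density matrices (positive semidefinite Hermitian matrices with unit trace). Then $\mathrm{Spec}(\sigma) \prec \mathrm{Spec}(\rho)$ if and only if there exist a positive integer $N$, a probability vector $p = (p_1, \ldots, p_N)$ (i.e., $p_i \geq 0$ and $\sum_i p_i = 1$), and $n \times n$ unitary matrices $U_1, \ldots, U_N$ such that $\sigma = \sum_{i=1}^N p_i U_i \rho U_i^\dagger$. -/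
open Matrix Polynomial
open scoped ComplexOrder

/-- Partial sum of the first `k` entries of a vector indexed by `Fin N`. -/
noncomputable def psum {N : ℕ} (v : Fin N → ℝ) (k : ℕ) : ℝ :=
  ∑ i ∈ Finset.univ.filter (fun i : Fin N => (i : ℕ) < k), v i

/-- `lam` is the vector of eigenvalues of `M` listed with multiplicity:
the characteristic polynomial of `M` is `∏ i (X - lam i)`. -/
def HasSpectrum {m : Type*} [Fintype m] [DecidableEq m] {N : ℕ}
    (M : Matrix m m ℂ) (lam : Fin N → ℝ) : Prop :=
  M.charpoly = ∏ i, (X - C (lam i : ℂ))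

namespace UhlmannAux

variable {n : ℕ}

/-! ### charpoly lemmas -/

lemma charpoly_diag (d : Fin n → ℂ) :
    (diagonal d).charpoly = ∏ i, (X - C (d i)) := by
  have h : charmatrix (diagonal d) = diagonal (fun i => X - C (d i)) := by
    ext i j
    rcases eq_or_ne i j with rfl | h
    · simp [charmatrix_apply_eq]
    · simp [charmatrix_apply_ne _ _ _ h, diagonal_apply_ne _ h]
  rw [Matrix.charpoly, h, det_diagonal]

lemma charpoly_conj (U A : Matrix (Fin n) (Fin n) ℂ) (hU : U ∈ Matrix.unitaryGroup (Fin n) ℂ) :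
    (U * A * Uᴴ).charpoly = A.charpoly := by
  have hmem : U * Uᴴ = 1 := Matrix.mem_unitaryGroup_iff.mp hU
  set f := (RingHom.mapMatrix (C : ℂ →+* ℂ[X]) :
    Matrix (Fin n) (Fin n) ℂ →+* Matrix (Fin n) (Fin n) ℂ[X]) with hf
  have hone : f U * f Uᴴ = 1 := by rw [← RingHom.map_mul, hmem, RingHom.map_one]
  have hcomm : Commute (scalar (Fin n) (X : ℂ[X])) (f U) :=
    Matrix.scalar_commute _ (fun r => Commute.all _ _) _
  have hcm : charmatrix (U * A * Uᴴ) = (f U) * charmatrix A * (f Uᴴ) := by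
    rw [charmatrix, charmatrix]
    rw [mul_sub, sub_mul]
    congr 1
    · rw [← hcomm.eq, mul_assoc, hone, mul_one]
    · show f (U * A * Uᴴ) = f U * f A * f Uᴴ
      simp [RingHom.map_mul]
  rw [Matrix.charpoly, Matrix.charpoly, hcm, det_mul, det_mul, mul_comm (det (f U)),
    mul_assoc, ← det_mul, hone, det_one, mul_one]

/-! ### permutations and multisets -/

lemma antitone_eq_of_multiset (f g : Fin n → ℝ) (hf : Antitone f) (hg : Antitone g)
    (h : Finset.univ.val.map f = Finset.univ.val.map g) : f = g := by
  have hperm : (List.ofFn f).Perm (List.ofFn g) := by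
    rw [← Multiset.coe_eq_coe]
    simpa [Fin.univ_val_map] using h
  have hf' : (List.ofFn f).Pairwise (· ≥ ·) := by
    rw [List.pairwise_ofFn]
    intro i j hij
    exact hf hij.le
  have hg' : (List.ofFn g).Pairwise (· ≥ ·) := by
    rw [List.pairwise_ofFn]
    intro i j hij
    exact hg hij.le
  have := List.Perm.eq_of_pairwise' hf' hg' hperm
  exact List.ofFn_injective this

lemma exists_perm_comp (f : Fin n → ℝ) (g : Fin n → ℝ) (hf : Antitone f)
    (h : Finset.univ.val.map f = Finset.univ.val.map g) :
    ∃ τ : Equiv.Perm (Fin n), f = g ∘ τ := by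
  classical
  set τ0 := Tuple.sort g
  set τ : Equiv.Perm (Fin n) := (Fin.revPerm : Equiv.Perm (Fin n)).trans τ0
  refine ⟨τ, ?_⟩
  have hmono : Monotone (g ∘ τ0) := Tuple.monotone_sort g
  have hanti : Antitone (g ∘ ⇑τ) := by
    intro i j hij
    exact hmono (by simpa using Fin.rev_le_rev.mpr hij)
  refine antitone_eq_of_multiset f (g ∘ τ) hf hanti ?_
  rw [h]
  have h2 : Multiset.map (⇑τ) Finset.univ.val = Finset.univ.val :=
    Multiset.map_univ_val_equiv τ
  rw [show Multiset.map (g ∘ ⇑τ) Finset.univ.val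
      = Multiset.map g (Multiset.map (⇑τ) Finset.univ.val) by rw [Multiset.map_map], h2]

lemma permMatrix_apply (σ : Equiv.Perm (Fin n)) (i j : Fin n) :
    σ.permMatrix ℂ i j = if σ i = j then 1 else 0 := by
  simp [Equiv.Perm.permMatrix, PEquiv.toMatrix_apply, Equiv.toPEquiv_apply]

lemma permMatrix_unitary (σ : Equiv.Perm (Fin n)) :
    σ.permMatrix ℂ ∈ Matrix.unitaryGroup (Fin n) ℂ := by
  rw [Matrix.mem_unitaryGroup_iff]
  ext i j
  simp only [Matrix.mul_apply, Matrix.conjTranspose_apply, permMatrix_apply, apply_ite,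
    star_one, star_zero, ite_mul, one_mul, zero_mul]
  rw [Finset.sum_eq_single (σ i)]
  · simp [Matrix.one_apply, Equiv.toPEquiv_apply, eq_comm, σ.injective.eq_iff]
  · intro b _ hb
    simp [Ne.symm hb]
  · simp

lemma perm_conj_diag (d : Fin n → ℂ) (σ : Equiv.Perm (Fin n)) :
    (σ.permMatrix ℂ) * diagonal d * (σ.permMatrix ℂ)ᴴ = diagonal (d ∘ σ) := by
  ext i j
  rw [Matrix.mul_apply]
  rw [Finset.sum_eq_single (σ i)]
  · rw [Matrix.mul_diagonal, Matrix.conjTranspose_apply, permMatrix_apply, permMatrix_apply]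
    simp only [if_pos rfl, one_mul, apply_ite, star_one, star_zero, mul_ite, mul_one, mul_zero]
    rw [diagonal_apply]
    simp [σ.injective.eq_iff, eq_comm, Function.comp]
  · intro b _ hb
    rw [Matrix.mul_diagonal, permMatrix_apply, if_neg (Ne.symm hb)]
    simp
  · simp

/-! ### spectra -/

lemma hasSpectrum_roots {M : Matrix (Fin n) (Fin n) ℂ} {lam : Fin n → ℝ}
    (h : HasSpectrum M lam) :
    M.charpoly.roots = Finset.univ.val.map (fun i => (lam i : ℂ)) := by
  rw [h, Finset.prod_eq_multiset_prod]
  have : Multiset.map (fun i => X - C ((lam i : ℂ))) Finset.univ.val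
      = Multiset.map (fun a => X - C a)
        (Multiset.map (fun i => ((lam i : ℂ))) Finset.univ.val) := by
    rw [Multiset.map_map]; rfl
  rw [this, Polynomial.roots_multiset_prod_X_sub_C]

lemma hasSpectrum_unique {M : Matrix (Fin n) (Fin n) ℂ} {lam mu : Fin n → ℝ}
    (h1 : HasSpectrum M lam) (h2 : HasSpectrum M mu) :
    Finset.univ.val.map lam = Finset.univ.val.map mu := by
  have := (hasSpectrum_roots h1).symm.trans (hasSpectrum_roots h2)
  have h3 : Multiset.map (Complex.ofReal) (Finset.univ.val.map lam)
      = Multiset.map (Complex.ofReal) (Finset.univ.val.map mu) := by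
    rw [Multiset.map_map, Multiset.map_map]
    exact this
  exact Multiset.map_injective Complex.ofReal_injective h3

lemma trace_hasSpectrum {M : Matrix (Fin n) (Fin n) ℂ} {lam : Fin n → ℝ}
    (h : HasSpectrum M lam) : M.trace = ∑ i, (lam i : ℂ) := by
  rw [Matrix.trace_eq_sum_roots_charpoly, hasSpectrum_roots h]
  rw [Finset.sum_eq_multiset_sum]

lemma sum_spectrum {M : Matrix (Fin n) (Fin n) ℂ} {lam : Fin n → ℝ}
    (h : HasSpectrum M lam) (htr : M.trace = 1) : ∑ i, lam i = 1 := by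
  have h1 : ((∑ i, lam i : ℝ) : ℂ) = 1 := by
    push_cast
    rw [← trace_hasSpectrum h, htr]
  exact_mod_cast h1

lemma spec_diag (A : Matrix (Fin n) (Fin n) ℂ) (hA : A.IsHermitian) (lam : Fin n → ℝ)
    (hanti : Antitone lam) (hspec : HasSpectrum A lam) :
    ∃ V ∈ Matrix.unitaryGroup (Fin n) ℂ,
      A = V * diagonal (fun i => (lam i : ℂ)) * Vᴴ := by
  classical
  obtain ⟨e, V0, hV0u, hV0e⟩ : ∃ (e : Fin n → ℝ) (V0 : Matrix (Fin n) (Fin n) ℂ),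
      V0 ∈ Matrix.unitaryGroup (Fin n) ℂ ∧
      A = V0 * diagonal (fun i => ((e i : ℝ) : ℂ)) * V0ᴴ := by
    refine ⟨hA.eigenvalues, (hA.eigenvectorUnitary : Matrix (Fin n) (Fin n) ℂ),
      hA.eigenvectorUnitary.2, ?_⟩
    simpa [Function.comp_def, Matrix.star_eq_conjTranspose] using hA.spectral_theorem
  have hspec2 : HasSpectrum A e := by
    unfold HasSpectrum
    rw [hV0e, charpoly_conj _ _ hV0u]
    exact charpoly_diag _
  have hmult := hasSpectrum_unique hspec hspec2
  obtain ⟨τ, hτ⟩ := exists_perm_comp lam e hanti hmult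
  set P := τ.permMatrix ℂ with hP
  have hdiag : diagonal (fun i => (lam i : ℂ))
      = P * diagonal (fun i => ((e i : ℝ) : ℂ)) * Pᴴ := by
    rw [perm_conj_diag]
    have : (fun i => ((lam i : ℝ) : ℂ)) = (fun i => ((e i : ℝ) : ℂ)) ∘ τ := by
      rw [hτ]; rfl
    rw [this]
  refine ⟨V0 * Pᴴ, ?_, ?_⟩
  · exact mul_mem hV0u (Unitary.star_mem (permMatrix_unitary τ))
  · have hPu' : Pᴴ * P = 1 := Matrix.mem_unitaryGroup_iff'.mp (permMatrix_unitary τ)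
    refine hV0e.trans ?_
    rw [hdiag, conjTranspose_mul, conjTranspose_conjTranspose]
    simp only [Matrix.mul_assoc]
    congr 1
    rw [← Matrix.mul_assoc Pᴴ P V0ᴴ, hPu', one_mul,
      ← Matrix.mul_assoc Pᴴ P _, hPu', one_mul]

/-! ### psum lemmas -/

/-- extension of `v` by zero -/
noncomputable def vext (v : Fin n → ℝ) (i : ℕ) : ℝ := if h : i < n then v ⟨i, h⟩ else 0

lemma psum_as_sum (v : Fin n → ℝ) (k : ℕ) :
    psum v k = ∑ i : Fin n, (if (i : ℕ) < k then v i else 0) := by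
  unfold psum
  rw [Finset.sum_filter]

lemma psum_eq_range (v : Fin n → ℝ) (k : ℕ) (hk : k ≤ n) :
    psum v k = ∑ i ∈ Finset.range k, vext v i := by
  rw [psum_as_sum]
  have h1 : ∑ i : Fin n, (if (i : ℕ) < k then v i else 0)
      = ∑ i ∈ Finset.range n, (if i < k then vext v i else 0) := by
    rw [← Fin.sum_univ_eq_sum_range (fun i => if i < k then vext v i else 0) n]
    apply Finset.sum_congr rfl
    intro i _
    by_cases h : (i : ℕ) < k
    · rw [if_pos h, if_pos h]
      unfold vext
      rw [dif_pos i.2, Fin.eta]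
    · rw [if_neg h, if_neg h]
  rw [h1, ← Finset.sum_filter]
  congr 1
  ext i
  simp only [Finset.mem_filter, Finset.mem_range]
  omega

lemma psum_univ (v : Fin n → ℝ) : psum v n = ∑ i, v i := by
  unfold psum
  rw [Finset.filter_true_of_mem]
  intro i _
  exact i.2

lemma psum_one (k : ℕ) (hk : k ≤ n) :
    psum (fun _ : Fin n => (1 : ℝ)) k = k := by
  rw [psum_eq_range _ k hk]
  rw [Finset.sum_congr rfl (fun i hi => ?_), Finset.sum_const, Finset.card_range,
    nsmul_eq_mul, mul_one]
  · show vext (fun _ => (1:ℝ)) i = 1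
    unfold vext
    rw [dif_pos (lt_of_lt_of_le (Finset.mem_range.mp hi) hk)]

lemma sum_mul_le_psum (lr : Fin n → ℝ) (hlr : Antitone lr) (t : Fin n → ℝ)
    (h0 : ∀ m, 0 ≤ t m) (h1 : ∀ m, t m ≤ 1) (k : ℕ) (hk : k < n)
    (hs : ∑ m, t m = k) :
    ∑ m, t m * lr m ≤ psum lr k := by
  set c : ℝ := lr ⟨k, hk⟩ with hc
  set χ : Fin n → ℝ := fun m => if (m : ℕ) < k then 1 else 0 with hχ
  have hχs : ∑ m, χ m = k := by
    have := psum_one (n := n) k hk.le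
    rw [psum_as_sum] at this
    simpa [hχ] using this
  have key : ∑ m, (t m - χ m) * (lr m - c) ≤ 0 := by
    apply Finset.sum_nonpos
    intro m _
    rcases lt_or_ge (m : ℕ) k with h | h
    · have h2 : (0:ℝ) ≤ lr m - c := by
        have hle : m ≤ (⟨k, hk⟩ : Fin n) := by
          rw [Fin.le_def]; exact h.le
        simpa [hc] using sub_nonneg.mpr (hlr hle)
      have h3 : t m - χ m ≤ 0 := by
        simp only [hχ, if_pos h]; linarith [h1 m]
      exact mul_nonpos_of_nonpos_of_nonneg h3 h2
    · have h2 : lr m - c ≤ 0 := by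
        have hle : (⟨k, hk⟩ : Fin n) ≤ m := by
          rw [Fin.le_def]; exact h
        simpa [hc] using sub_nonpos.mpr (hlr hle)
      have h3 : 0 ≤ t m - χ m := by
        simp only [hχ, if_neg (not_lt.mpr h)]; linarith [h0 m]
      exact mul_nonpos_of_nonneg_of_nonpos h3 h2
  have expand : ∑ m, (t m - χ m) * (lr m - c)
      = ∑ m, t m * lr m - ∑ m, χ m * lr m - c * (∑ m, t m) + c * (∑ m, χ m) := by
    rw [Finset.mul_sum, Finset.mul_sum, ← Finset.sum_sub_distrib, ← Finset.sum_sub_distrib,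
      ← Finset.sum_add_distrib]
    apply Finset.sum_congr rfl
    intro m _
    ring
  rw [expand, hs, hχs] at key
  have hpsum : ∑ m, χ m * lr m = psum lr k := by
    rw [psum_as_sum]
    apply Finset.sum_congr rfl
    intro m _
    by_cases h : (m : ℕ) < k <;> simp [hχ, h]
  rw [hpsum] at key
  linarith

lemma abel_ineq (lr ls : Fin n → ℝ) (c : Fin n → ℝ) (hmono : Monotone c)
    (hP : ∀ k : ℕ, k < n → psum ls k ≤ psum lr k) (hE : psum ls n = psum lr n) :
    ∑ i, c i * lr i ≤ ∑ i, c i * ls i := by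
  rcases Nat.eq_zero_or_pos n with rfl | hn
  · simp
  set d : ℕ → ℝ := fun i => vext lr i - vext ls i with hd
  set f : ℕ → ℝ := fun i => if h : i < n then c ⟨i, h⟩ else c ⟨n - 1, by omega⟩ with hf
  have hD : ∀ k, k ≤ n → ∑ i ∈ Finset.range k, d i = psum lr k - psum ls k := by
    intro k hk
    rw [psum_eq_range _ k hk, psum_eq_range _ k hk, ← Finset.sum_sub_distrib]
  have habel : ∑ i ∈ Finset.range n, f i • d i
      = f (n - 1) • (∑ i ∈ Finset.range n, d i)
        - ∑ i ∈ Finset.range (n - 1), (f (i + 1) - f i) • (∑ j ∈ Finset.range (i + 1), d j) :=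
    Finset.sum_range_by_parts f d n
  have hDn : ∑ i ∈ Finset.range n, d i = 0 := by
    rw [hD n le_rfl, hE]; ring
  have hsecond : 0 ≤ ∑ i ∈ Finset.range (n - 1),
      (f (i + 1) - f i) • (∑ j ∈ Finset.range (i + 1), d j) := by
    apply Finset.sum_nonneg
    intro i hi
    have hi' : i + 1 < n := by
      have := Finset.mem_range.mp hi; omega
    have h1 : 0 ≤ f (i + 1) - f i := by
      rw [hf]
      simp only
      rw [dif_pos hi', dif_pos (by omega : i < n)]
      exact sub_nonneg.mpr (hmono (by rw [Fin.le_def]; simp))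
    have h2 : 0 ≤ ∑ j ∈ Finset.range (i + 1), d j := by
      rw [hD (i + 1) hi'.le]
      exact sub_nonneg.mpr (hP (i + 1) hi')
    exact mul_nonneg h1 h2
  have hmain : ∑ i ∈ Finset.range n, f i • d i ≤ 0 := by
    rw [habel, hDn, smul_zero]
    linarith
  have hconv : ∑ i ∈ Finset.range n, f i • d i = ∑ i, c i * lr i - ∑ i, c i * ls i := by
    rw [← Finset.sum_sub_distrib, ← Fin.sum_univ_eq_sum_range (fun i => f i • d i) n]
    apply Finset.sum_congr rfl
    intro i _
    rw [hf, hd]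
    simp only
    rw [dif_pos i.2]
    unfold vext
    rw [dif_pos i.2, dif_pos i.2, Fin.eta, smul_eq_mul]
    ring
  linarith [hconv ▸ hmain]

/-! ### HLP via separation -/

lemma hlp_convexHull (lr ls : Fin n → ℝ) (hls : Antitone ls)
    (hP : ∀ k : ℕ, k < n → psum ls k ≤ psum lr k) (hE : psum ls n = psum lr n) :
    ls ∈ convexHull ℝ ((fun π : Equiv.Perm (Fin n) => lr ∘ π) '' Set.univ) := by
  classical
  set S : Set (Fin n → ℝ) := (fun π : Equiv.Perm (Fin n) => lr ∘ π) '' Set.univ with hS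
  by_contra hmem
  have hSfin : S.Finite := (Set.finite_univ).image _
  have hclosed : IsClosed (convexHull ℝ S) := hSfin.isClosed_convexHull ℝ
  have hconv : Convex ℝ (convexHull ℝ S) := convex_convexHull ℝ S
  obtain ⟨f, u, hf1, hf2⟩ := geometric_hahn_banach_point_closed hconv hclosed hmem
  set c : Fin n → ℝ := fun i => f (Pi.single i 1) with hc
  have hf_eq : ∀ v : Fin n → ℝ, f v = ∑ i, v i * c i := by
    intro v
    have hv : v = ∑ i, v i • (Pi.single i (1 : ℝ) : Fin n → ℝ) := by
      funext j
      simp [Pi.single_apply, Finset.sum_apply]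
    conv_lhs => rw [hv]
    rw [map_sum]
    apply Finset.sum_congr rfl
    intro i _
    rw [ContinuousLinearMap.map_smul]
    simp [hc, smul_eq_mul]
  set τ : Equiv.Perm (Fin n) := Tuple.sort c with hτ
  have hmono : Monotone (c ∘ τ) := Tuple.monotone_sort c
  have hanti : Antivary ls (c ∘ τ) := by
    intro i j hij
    have hij' : i ≤ j := by
      by_contra h
      exact absurd (hmono (le_of_not_ge h)) (not_le.mpr hij)
    exact hls hij'
  have hrearr : ∑ i, ls i * (c ∘ τ) i ≤ ∑ i, ls (τ i) * (c ∘ τ) i := by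
    have := hanti.sum_smul_le_sum_comp_perm_smul (σ := τ)
    simpa [smul_eq_mul] using this
  have hfls : f ls = ∑ i, ls (τ i) * (c ∘ τ) i := by
    rw [hf_eq]
    rw [← Equiv.sum_comp τ (fun i => ls i * c i)]
    rfl
  have habel : ∑ i, (c ∘ τ) i * lr i ≤ ∑ i, (c ∘ τ) i * ls i :=
    abel_ineq lr ls (c ∘ τ) hmono hP hE
  have horbit : (lr ∘ ⇑(τ⁻¹) : Fin n → ℝ) ∈ convexHull ℝ S := by
    apply subset_convexHull
    exact ⟨τ⁻¹, Set.mem_univ _, rfl⟩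
  have hfq : f (lr ∘ ⇑(τ⁻¹)) = ∑ i, (c ∘ τ) i * lr i := by
    rw [hf_eq]
    rw [← Equiv.sum_comp τ (fun i => (lr ∘ ⇑(τ⁻¹)) i * c i)]
    apply Finset.sum_congr rfl
    intro i _
    simp [Function.comp, mul_comm]
  have h1 : u < f (lr ∘ ⇑(τ⁻¹)) := hf2 _ horbit
  have h2 : ∑ i, ls i * (c ∘ τ) i ≤ f ls := by
    rw [hfls]; exact hrearr
  have h3 : ∑ i, (c ∘ τ) i * ls i = ∑ i, ls i * (c ∘ τ) i := by
    apply Finset.sum_congr rfl; intro i _; ring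
  linarith [hfq ▸ h1, h3 ▸ h2, hf1]

/-! ### unitary sums of squares -/

lemma unitary_row_sum (A : Matrix (Fin n) (Fin n) ℂ) (hA : A ∈ Matrix.unitaryGroup (Fin n) ℂ)
    (j : Fin n) : ∑ m, Complex.normSq (A j m) = 1 := by
  have h : (A * Aᴴ) j j = 1 := by
    rw [← Matrix.star_eq_conjTranspose, Matrix.mem_unitaryGroup_iff.mp hA]
    simp [Matrix.one_apply]
  rw [Matrix.mul_apply] at h
  have h2 : ∑ m, ((Complex.normSq (A j m) : ℝ) : ℂ) = 1 := by
    rw [← h]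
    apply Finset.sum_congr rfl
    intro m _
    rw [Matrix.conjTranspose_apply, Complex.star_def, Complex.mul_conj]
  have h3 : ((∑ m, Complex.normSq (A j m) : ℝ) : ℂ) = 1 := by push_cast; exact h2
  exact_mod_cast h3

lemma unitary_col_sum (A : Matrix (Fin n) (Fin n) ℂ) (hA : A ∈ Matrix.unitaryGroup (Fin n) ℂ)
    (m : Fin n) : ∑ j, Complex.normSq (A j m) = 1 := by
  have h : (Aᴴ * A) m m = 1 := by
    rw [← Matrix.star_eq_conjTranspose, Matrix.mem_unitaryGroup_iff'.mp hA]
    simp [Matrix.one_apply]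
  rw [Matrix.mul_apply] at h
  have h2 : ∑ j, ((Complex.normSq (A j m) : ℝ) : ℂ) = 1 := by
    rw [← h]
    apply Finset.sum_congr rfl
    intro j _
    rw [Matrix.conjTranspose_apply, Complex.star_def, mul_comm, Complex.mul_conj]
  have h3 : ((∑ j, Complex.normSq (A j m) : ℝ) : ℂ) = 1 := by push_cast; exact h2
  exact_mod_cast h3

lemma conj_diag_diagonal_entry (A : Matrix (Fin n) (Fin n) ℂ) (lam : Fin n → ℝ) (j : Fin n) :
    (A * diagonal (fun i => (lam i : ℂ)) * Aᴴ) j j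
      = ∑ m, ((lam m * Complex.normSq (A j m) : ℝ) : ℂ) := by
  rw [Matrix.mul_apply]
  apply Finset.sum_congr rfl
  intro m _
  rw [Matrix.mul_diagonal, Matrix.conjTranspose_apply]
  push_cast
  rw [Complex.star_def, mul_comm (A j m) ((lam m : ℂ)), mul_assoc, Complex.mul_conj]

end UhlmannAux

open UhlmannAux

theorem uhlmann {n : ℕ}
    (ρ σ : Matrix (Fin n) (Fin n) ℂ)
    (hρ : ρ.PosSemidef) (hσ : σ.PosSemidef)
    (hρtr : ρ.trace = 1) (hσtr : σ.trace = 1)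
    (lr ls : Fin n → ℝ) (hlr : Antitone lr) (hls : Antitone ls)
    (hrspec : HasSpectrum ρ lr) (hsspec : HasSpectrum σ ls) :
    ((∀ k : ℕ, k < n → psum ls k ≤ psum lr k) ∧ psum ls n = psum lr n) ↔
      ∃ (N : ℕ) (p : Fin N → ℝ) (U : Fin N → Matrix (Fin n) (Fin n) ℂ),
        (∀ i, 0 ≤ p i) ∧ (∑ i, p i) = 1 ∧
        (∀ i, U i ∈ Matrix.unitaryGroup (Fin n) ℂ) ∧
        σ = ∑ i, (p i : ℂ) • (U i * ρ * (U i)ᴴ) := by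
  classical
  -- diagonalizations
  obtain ⟨V, hVu, hVe⟩ := spec_diag ρ hρ.1 lr hlr hrspec
  obtain ⟨W, hWu, hWe⟩ := spec_diag σ hσ.1 ls hls hsspec
  have hsum_lr : ∑ i, lr i = 1 := sum_spectrum hrspec hρtr
  have hsum_ls : ∑ i, ls i = 1 := sum_spectrum hsspec hσtr
  have hEq : psum ls n = psum lr n := by
    rw [psum_univ, psum_univ, hsum_lr, hsum_ls]
  constructor
  · rintro ⟨hP, -⟩
    -- hard direction
    have hmem := hlp_convexHull lr ls hls hP hEq
    rw [mem_convexHull_iff_exists_fintype] at hmem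
    obtain ⟨ι, hfin, w, z, hw0, hw1, hz, hzsum⟩ := hmem
    choose g hg1 hg2 using hz
    -- reindex by Fin N
    set N := Fintype.card ι with hN
    set e : Fin N ≃ ι := (Fintype.equivFin ι).symm with he
    refine ⟨N, fun i => w (e i), fun i => W * ((g (e i)).permMatrix ℂ) * Vᴴ, ?_, ?_, ?_, ?_⟩
    · intro i; exact hw0 _
    · rw [← hw1]; exact Fintype.sum_equiv e _ _ (fun i => rfl)
    · intro i
      exact mul_mem (mul_mem hWu (permMatrix_unitary _)) (Unitary.star_mem hVu)
    · -- main computation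
      have hV' : Vᴴ * V = 1 := by
        rw [← Matrix.star_eq_conjTranspose]; exact Matrix.mem_unitaryGroup_iff'.mp hVu
      have hlsj : ∀ j, ls j = ∑ a : ι, w a * lr (g a j) := by
        intro j
        have h1 := congrFun hzsum j
        rw [Finset.sum_apply] at h1
        rw [← h1]
        apply Finset.sum_congr rfl
        intro a _
        rw [Pi.smul_apply, smul_eq_mul, ← hg2 a]
        rfl
      have hdiagsum : diagonal (fun j => (ls j : ℂ))
          = ∑ a : ι, (w a : ℂ) •
            ((g a).permMatrix ℂ * diagonal (fun m => (lr m : ℂ)) * ((g a).permMatrix ℂ)ᴴ) := by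
        simp only [perm_conj_diag]
        ext i j
        rw [Matrix.sum_apply]
        rcases eq_or_ne i j with rfl | hij
        · rw [diagonal_apply_eq]
          have : ∀ a : ι, ((w a : ℂ) • diagonal ((fun m => (lr m : ℂ)) ∘ ⇑(g a))) i i
              = (w a : ℂ) * (lr (g a i) : ℂ) := by
            intro a
            rw [Matrix.smul_apply, diagonal_apply_eq, smul_eq_mul]
            rfl
          rw [Finset.sum_congr rfl (fun a _ => this a), hlsj i]
          push_cast
          rfl
        · rw [diagonal_apply_ne _ hij]
          symm
          apply Finset.sum_eq_zero
          intro a _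
          rw [Matrix.smul_apply, diagonal_apply_ne _ hij, smul_zero]
      have hterm : ∀ a : ι,
          W * ((g a).permMatrix ℂ * diagonal (fun m => (lr m : ℂ)) * ((g a).permMatrix ℂ)ᴴ) * Wᴴ
          = (W * (g a).permMatrix ℂ * Vᴴ) * ρ * (W * (g a).permMatrix ℂ * Vᴴ)ᴴ := by
        intro a
        rw [hVe]
        simp only [Matrix.conjTranspose_mul, Matrix.conjTranspose_conjTranspose,
          Matrix.mul_assoc]
        rw [← Matrix.mul_assoc Vᴴ V, hV', one_mul, ← Matrix.mul_assoc Vᴴ V, hV', one_mul]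
      have hσ2 : σ = ∑ a : ι, (w a : ℂ) •
          ((W * (g a).permMatrix ℂ * Vᴴ) * ρ * (W * (g a).permMatrix ℂ * Vᴴ)ᴴ) := by
        rw [hWe, hdiagsum, Matrix.mul_sum, Matrix.sum_mul]
        apply Finset.sum_congr rfl
        intro a _
        rw [mul_smul_comm, smul_mul_assoc, hterm a]
      rw [hσ2]
      exact (Fintype.sum_equiv e _ _ (fun i => rfl)).symm
  · rintro ⟨N, p, U, hp0, hp1, hUu, hUe⟩
    -- easy direction
    refine ⟨?_, hEq⟩
    intro k hk
    -- set A i := Wᴴ * U i * V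
    set A : Fin N → Matrix (Fin n) (Fin n) ℂ := fun i => Wᴴ * U i * V with hA
    have hAu : ∀ i, A i ∈ Matrix.unitaryGroup (Fin n) ℂ := fun i =>
      mul_mem (mul_mem (Unitary.star_mem hWu) (hUu i)) hVu
    set q : Fin n → Fin n → ℝ := fun j m => ∑ i, p i * Complex.normSq (A i j m) with hq
    have hq0 : ∀ j m, 0 ≤ q j m := by
      intro j m
      exact Finset.sum_nonneg fun i _ => mul_nonneg (hp0 i) (Complex.normSq_nonneg _)
    have hqrow : ∀ j, ∑ m, q j m = 1 := by
      intro j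
      rw [hq]
      simp only
      rw [Finset.sum_comm]
      calc ∑ i, ∑ m, p i * Complex.normSq (A i j m)
          = ∑ i, p i * ∑ m, Complex.normSq (A i j m) := by
            apply Finset.sum_congr rfl; intro i _; rw [Finset.mul_sum]
        _ = ∑ i, p i := by
            apply Finset.sum_congr rfl; intro i _; rw [unitary_row_sum _ (hAu i), mul_one]
        _ = 1 := hp1
    have hqcol : ∀ m, ∑ j, q j m = 1 := by
      intro m
      rw [hq]
      simp only
      rw [Finset.sum_comm]
      calc ∑ i, ∑ j, p i * Complex.normSq (A i j m)
          = ∑ i, p i * ∑ j, Complex.normSq (A i j m) := by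
            apply Finset.sum_congr rfl; intro i _; rw [Finset.mul_sum]
        _ = ∑ i, p i := by
            apply Finset.sum_congr rfl; intro i _; rw [unitary_col_sum _ (hAu i), mul_one]
        _ = 1 := hp1
    have hW' : Wᴴ * W = 1 := by
      rw [← Matrix.star_eq_conjTranspose]; exact Matrix.mem_unitaryGroup_iff'.mp hWu
    have hE : diagonal (fun i => (ls i : ℂ)) = Wᴴ * σ * W := by
      rw [hWe]
      simp only [Matrix.mul_assoc]
      rw [hW', mul_one, ← Matrix.mul_assoc Wᴴ W, hW', one_mul]
    have hterm : ∀ i : Fin N, Wᴴ * (U i * ρ * (U i)ᴴ) * W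
        = A i * diagonal (fun m => (lr m : ℂ)) * (A i)ᴴ := by
      intro i
      rw [hVe, hA]
      simp only [Matrix.conjTranspose_mul, Matrix.conjTranspose_conjTranspose, Matrix.mul_assoc]
    have hls_eq : ∀ j, ls j = ∑ m, q j m * lr m := by
      intro j
      have hC : ((ls j : ℝ) : ℂ) = ∑ i, (p i : ℂ) * ∑ m, ((lr m * Complex.normSq (A i j m) : ℝ) : ℂ) := by
        have h1 : ((ls j : ℝ) : ℂ) = (Wᴴ * σ * W) j j := by
          rw [← hE]; simp [diagonal_apply]
        rw [h1, hUe]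
        have h2 : Wᴴ * (∑ i, (p i : ℂ) • (U i * ρ * (U i)ᴴ)) * W
            = ∑ i, (p i : ℂ) • (Wᴴ * (U i * ρ * (U i)ᴴ) * W) := by
          rw [Matrix.mul_sum, Matrix.sum_mul]
          apply Finset.sum_congr rfl
          intro i _
          rw [mul_smul_comm, smul_mul_assoc]
        rw [h2]
        rw [Matrix.sum_apply]
        apply Finset.sum_congr rfl
        intro i _
        rw [Matrix.smul_apply, hterm i, conj_diag_diagonal_entry, smul_eq_mul]
      have hR : ((∑ m, q j m * lr m : ℝ) : ℂ)
          = ∑ i, (p i : ℂ) * ∑ m, ((lr m * Complex.normSq (A i j m) : ℝ) : ℂ) := by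
        simp only [hq]
        push_cast
        simp only [Finset.sum_mul]
        rw [Finset.sum_comm]
        apply Finset.sum_congr rfl
        intro i _
        rw [Finset.mul_sum]
        apply Finset.sum_congr rfl
        intro m _
        ring
      have := hC.trans hR.symm
      exact_mod_cast this
    -- partial sums
    have hpsum : psum ls k = ∑ m, (∑ j ∈ Finset.univ.filter (fun j : Fin n => (j:ℕ) < k), q j m) * lr m := by
      unfold psum
      rw [Finset.sum_congr rfl (fun j _ => hls_eq j)]
      rw [Finset.sum_comm]
      apply Finset.sum_congr rfl
      intro m _
      rw [Finset.sum_mul]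
    set t : Fin n → ℝ := fun m => ∑ j ∈ Finset.univ.filter (fun j : Fin n => (j:ℕ) < k), q j m with ht
    have ht0 : ∀ m, 0 ≤ t m := fun m =>
      Finset.sum_nonneg fun j _ => hq0 j m
    have ht1 : ∀ m, t m ≤ 1 := by
      intro m
      rw [ht]
      calc ∑ j ∈ Finset.univ.filter (fun j : Fin n => (j:ℕ) < k), q j m
          ≤ ∑ j, q j m := Finset.sum_le_sum_of_subset_of_nonneg (Finset.filter_subset _ _)
            (fun j _ _ => hq0 j m)
        _ = 1 := hqcol m
    have hts : ∑ m, t m = k := by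
      rw [ht]
      rw [Finset.sum_comm]
      rw [Finset.sum_congr rfl (fun j _ => hqrow j)]
      have := psum_one (n := n) k hk.le
      unfold psum at this
      simpa using this
    rw [hpsum]
    exact sum_mul_le_psum lr hlr t ht0 ht1 k hk hts
end

section
/- (Ky Fan's maximum principle) Let $A$ be an $n \times n$ Hermitian matrix with eigenvalues $\lambda_1 \geq \lambda_2 \geq \cdots \geq \lambda_n$. Then for every $k \in \{1, \ldots, n\}$, $\sum_{j=1}^k \lambda_j = \max \sum_{j=1}^k \langle x_j, A x_j \rangle$, where the maximum is taken over all orthonormal $k$-tuples of vectors $(x_1, \ldots, x_k)$ in $\mathbb{C}^n$; equivalently, $\sum_{j=1}^k \lambda_j$ is the maximum of $\mathrm{Tr}(P_V A)$ over all $k$-dimensional subspaces $V \leq \mathbb{C}^n$, where $P_V$ is the orthogonal projection onto $V$. -/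
open Matrix Polynomial

section Aux

/-- Characteristic polynomial is invariant under conjugation. -/
lemma charpoly_conj_aux {n : ℕ} (U B V : Matrix (Fin n) (Fin n) ℂ)
    (hUV : U * V = 1) : (U * B * V).charpoly = B.charpoly := by
  have hmapUV : (U.map C) * (V.map C) = 1 := by
    rw [← Matrix.map_mul, hUV, Matrix.map_one _ (map_zero _) (map_one _)]
  have hcm : charmatrix (U * B * V) = U.map C * charmatrix B * V.map C := by
    rw [charmatrix, charmatrix]
    have h1 : U.map C * (Matrix.scalar (Fin n) (X : ℂ[X])) * V.map C
        = Matrix.scalar (Fin n) (X : ℂ[X]) := by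
      rw [← (Matrix.scalar_commute (X : ℂ[X]) (fun r => Commute.all _ _) (U.map C)).eq,
        Matrix.mul_assoc, hmapUV, Matrix.mul_one]
    rw [Matrix.mul_sub, Matrix.sub_mul, h1]
    congr 1
    simp only [RingHom.mapMatrix_apply, Matrix.map_mul]
  rw [Matrix.charpoly, Matrix.charpoly, hcm, Matrix.det_mul, Matrix.det_mul]
  have : (U.map C).det * (V.map C).det = 1 := by
    rw [← Matrix.det_mul, hmapUV, Matrix.det_one]
  calc (U.map C).det * (charmatrix B).det * (V.map C).det
      = ((U.map C).det * (V.map C).det) * (charmatrix B).det := by ring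
    _ = (charmatrix B).det := by rw [this, one_mul]

lemma charpoly_diagonal_aux {n : ℕ} (d : Fin n → ℂ) :
    (Matrix.diagonal d).charpoly = ∏ i, (X - C (d i)) := by
  rw [Matrix.charpoly]
  have : charmatrix (Matrix.diagonal d) = Matrix.diagonal (fun i => X - C (d i)) := by
    ext i j
    by_cases h : i = j
    · subst h; simp
    · simp [Matrix.charmatrix_apply_ne _ _ _ h, Matrix.diagonal_apply_ne _ h]
  rw [this, Matrix.det_diagonal]

/-- The characteristic polynomial of a Hermitian matrix is the product over its
(Mathlib) eigenvalues. -/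
lemma charpoly_hermitian {n : ℕ} (A : Matrix (Fin n) (Fin n) ℂ) (hA : A.IsHermitian) :
    A.charpoly = ∏ i, (X - C ((hA.eigenvalues i : ℝ) : ℂ)) := by
  have h1 : (hA.eigenvectorUnitary : Matrix (Fin n) (Fin n) ℂ) *
      star (hA.eigenvectorUnitary : Matrix (Fin n) (Fin n) ℂ) = 1 :=
    (Matrix.mem_unitaryGroup_iff).mp hA.eigenvectorUnitary.2
  conv_lhs => rw [hA.spectral_theorem, Unitary.conjStarAlgAut_apply]
  rw [charpoly_conj_aux _ _ _ h1, charpoly_diagonal_aux]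
  rfl

/-- Two antitone tuples with the same multiset of values are equal. -/
lemma antitone_eq_of_multiset_eq {n : ℕ} {f g : Fin n → ℝ} (hf : Antitone f) (hg : Antitone g)
    (h : Multiset.map f Finset.univ.val = Multiset.map g Finset.univ.val) : f = g := by
  rw [Fin.univ_val_map, Fin.univ_val_map, Multiset.coe_eq_coe] at h
  have hf' : (List.ofFn f).Pairwise (· ≥ ·) := by
    rw [List.pairwise_ofFn]; intro i j hij; exact hf hij.le
  have hg' : (List.ofFn g).Pairwise (· ≥ ·) := by
    rw [List.pairwise_ofFn]; intro i j hij; exact hg hij.le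
  exact List.ofFn_injective (List.Perm.eq_of_pairwise' hf' hg' h)

lemma filter_lt_eq_map {n k : ℕ} (hkn : k ≤ n) :
    (Finset.univ.filter fun i : Fin n => (i : ℕ) < k)
      = Finset.univ.map (Fin.castLEEmb hkn) := by
  ext i
  simp only [Finset.mem_filter, Finset.mem_univ, true_and, Finset.mem_map,
    Fin.castLEEmb_apply]
  constructor
  · intro h; exact ⟨⟨(i : ℕ), h⟩, Fin.ext rfl⟩
  · rintro ⟨a, rfl⟩; exact a.2

lemma psum_eq_sum_castLE {n k : ℕ} (hkn : k ≤ n) (v : Fin n → ℝ) :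
    psum v k = ∑ j : Fin k, v (Fin.castLE hkn j) := by
  rw [psum, filter_lt_eq_map hkn, Finset.sum_map]
  rfl

/-- The key combinatorial inequality. -/
lemma key_ineq {n k : ℕ} (lam c : Fin n → ℝ) (hlam : Antitone lam)
    (h0 : ∀ i, 0 ≤ c i) (h1 : ∀ i, c i ≤ 1) (hs : ∑ i, c i = (k : ℝ))
    (hk1 : 1 ≤ k) (hkn : k ≤ n) :
    ∑ i, lam i * c i ≤ psum lam k := by
  have hkpos : k - 1 < n := by omega
  set t := lam ⟨k - 1, hkpos⟩ with ht
  have hle : ∀ i : Fin n, (i : ℕ) < k → t ≤ lam i := by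
    intro i hi; exact hlam (by rw [Fin.le_def]; simp; omega)
  have hge : ∀ i : Fin n, ¬(i : ℕ) < k → lam i ≤ t := by
    intro i hi; exact hlam (by rw [Fin.le_def]; simp; omega)
  have hcard : (Finset.univ.filter fun i : Fin n => (i : ℕ) < k).card = k := by
    rw [filter_lt_eq_map hkn, Finset.card_map, Finset.card_univ, Fintype.card_fin]
  have step : ∀ i : Fin n,
      lam i * c i ≤ t * c i + (if (i : ℕ) < k then lam i - t else 0) := by
    intro i
    by_cases h : (i : ℕ) < k
    · simp only [h, if_true]
      nlinarith [hle i h, h1 i, h0 i]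
    · simp only [h, if_false]
      nlinarith [hge i h, h0 i]
  calc ∑ i, lam i * c i
      ≤ ∑ i, (t * c i + if (i : ℕ) < k then lam i - t else 0) :=
        Finset.sum_le_sum fun i _ => step i
    _ = t * (k : ℝ) + ∑ i ∈ Finset.univ.filter (fun i : Fin n => (i : ℕ) < k), (lam i - t) := by
        rw [Finset.sum_add_distrib, ← Finset.mul_sum, hs, ← Finset.sum_filter]
    _ = psum lam k := by
        rw [Finset.sum_sub_distrib, Finset.sum_const, hcard, psum]
        simp [nsmul_eq_mul]
        ring

end Aux

/-- Ky Fan's maximum principle: for an `n × n` Hermitian matrix `A` with nonincreasing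
eigenvalues `λ₁ ≥ ⋯ ≥ λₙ` and any `1 ≤ k ≤ n`, the sum `λ₁ + ⋯ + λ_k` is the maximum of
`∑_{j=1}^k ⟨x_j, A x_j⟩` over all orthonormal `k`-tuples `(x_1, …, x_k)` in `ℂⁿ`. -/
theorem kyFan_maximum_principle {n : ℕ} (A : Matrix (Fin n) (Fin n) ℂ)
    (hA : A.IsHermitian) (lam : Fin n → ℝ) (hlam : Antitone lam)
    (hspec : HasSpectrum A lam) (k : ℕ) (hk1 : 1 ≤ k) (hkn : k ≤ n) :
    IsGreatest {s : ℝ | ∃ x : Fin k → (Fin n → ℂ),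
        (∀ i j, star (x i) ⬝ᵥ x j = if i = j then 1 else 0) ∧
        (s : ℂ) = ∑ j, star (x j) ⬝ᵥ A.mulVec (x j)}
      (psum lam k) := by
  classical
  set eig := hA.eigenvalues with heig
  -- Step 1: `lam = eig ∘ σ` for a permutation `σ`.
  set σ : Equiv.Perm (Fin n) := Fin.revPerm.trans (Tuple.sort eig) with hσ
  have hanti : Antitone (eig ∘ σ) := by
    intro i j hij
    exact Tuple.monotone_sort eig (Fin.rev_le_rev.mpr hij)
  have hmult : Multiset.map (fun i => ((lam i : ℝ) : ℂ)) Finset.univ.val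
      = Multiset.map (fun i => ((eig i : ℝ) : ℂ)) Finset.univ.val := by
    have h1 : (Multiset.map (fun a : ℂ => X - C a)
        (Multiset.map (fun i => ((lam i : ℝ) : ℂ)) Finset.univ.val)).prod
        = (Multiset.map (fun a : ℂ => X - C a)
        (Multiset.map (fun i => ((eig i : ℝ) : ℂ)) Finset.univ.val)).prod := by
      rw [Multiset.map_map, Multiset.map_map]
      rw [← Finset.prod_eq_multiset_prod, ← Finset.prod_eq_multiset_prod]
      simp only [Function.comp_apply]
      rw [← hspec, charpoly_hermitian A hA]
    have := congrArg Polynomial.roots h1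
    rwa [Polynomial.roots_multiset_prod_X_sub_C, Polynomial.roots_multiset_prod_X_sub_C] at this
  have hmultσ : Multiset.map (eig ∘ σ) Finset.univ.val = Multiset.map eig Finset.univ.val := by
    conv_rhs => rw [← Finset.map_univ_equiv σ]
    rw [Finset.map_val, Multiset.map_map]
    rfl
  have hlameq : lam = eig ∘ σ := by
    apply antitone_eq_of_multiset_eq hlam hanti
    have hinj : Function.Injective (fun r : ℝ => (r : ℂ)) := Complex.ofReal_injective
    apply Multiset.map_injective hinj
    rw [Multiset.map_map, Multiset.map_map]
    simp only [Function.comp_def]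
    have hmultc : Multiset.map (fun i => ((eig (σ i) : ℝ) : ℂ)) Finset.univ.val
        = Multiset.map (fun i => ((eig i : ℝ) : ℂ)) Finset.univ.val := by
      conv_rhs => rw [← Finset.map_univ_equiv σ]
      rw [Finset.map_val, Multiset.map_map]
      rfl
    exact hmult.trans hmultc.symm
  -- Step 2: the reordered eigenvector basis.
  set u : OrthonormalBasis (Fin n) ℂ (EuclideanSpace ℂ (Fin n)) :=
    hA.eigenvectorBasis.reindex σ.symm with hu
  have huapp : ∀ i, u i = hA.eigenvectorBasis (σ i) := by
    intro i
    rw [hu, OrthonormalBasis.reindex_apply, Equiv.symm_symm]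
  have hAu : ∀ i, A *ᵥ ⇑(u i) = (lam i : ℂ) • ⇑(u i) := by
    intro i
    rw [huapp i, hA.mulVec_eigenvectorBasis (σ i)]
    have : lam i = eig (σ i) := by rw [hlameq]; rfl
    rw [this]
    ext j
    simp [Pi.smul_apply, Complex.real_smul, heig]
  have hinner : ∀ a b : EuclideanSpace ℂ (Fin n), (inner ℂ a b : ℂ) = star (⇑a) ⬝ᵥ ⇑b :=
    fun a b => by rw [EuclideanSpace.inner_eq_star_dotProduct, dotProduct_comm]
  have huon : ∀ i j : Fin n, (inner ℂ (u i) (u j) : ℂ) = if i = j then 1 else 0 :=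
    orthonormal_iff_ite.mp u.orthonormal
  constructor
  · -- membership: take the top k reordered eigenvectors
    refine ⟨fun j => ⇑(u (Fin.castLE hkn j)), ?_, ?_⟩
    · intro i j
      rw [← hinner, huon]
      simp [Fin.castLE_inj]
    · have hterm : ∀ j : Fin k, star ⇑(u (Fin.castLE hkn j)) ⬝ᵥ A *ᵥ ⇑(u (Fin.castLE hkn j))
          = ((lam (Fin.castLE hkn j) : ℝ) : ℂ) := by
        intro j
        rw [hAu, dotProduct_smul, ← hinner, huon]
        simp
      rw [psum_eq_sum_castLE hkn]
      push_cast
      exact Finset.sum_congr rfl fun j _ => (hterm j).symm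
  · -- upper bound
    rintro s ⟨x, hx, hs⟩
    set x' : Fin k → EuclideanSpace ℂ (Fin n) :=
      fun j => (WithLp.equiv 2 (Fin n → ℂ)).symm (x j) with hx'
    have hx'coe : ∀ j, (x' j).ofLp = x j := fun j => rfl
    have hx'on : Orthonormal ℂ x' := by
      rw [orthonormal_iff_ite]
      intro i j
      rw [hinner, hx'coe, hx'coe, hx i j]
    set c : Fin n → ℝ := fun i => ∑ j, ‖(inner ℂ (u i) (x' j) : ℂ)‖ ^ 2 with hc
    -- the quadratic form in terms of eigen-coordinates
    have hform : ∀ j : Fin k, star (x j) ⬝ᵥ A *ᵥ x j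
        = ∑ i, ((lam i : ℝ) : ℂ) * ((‖(inner ℂ (u i) (x' j) : ℂ)‖ : ℝ) : ℂ) ^ 2 := by
      intro j
      have hmid : ∀ i : Fin n, (inner ℂ (u i)
          ((WithLp.equiv 2 (Fin n → ℂ)).symm (A *ᵥ x j)) : ℂ)
          = ((lam i : ℝ) : ℂ) * (inner ℂ (u i) (x' j) : ℂ) := by
        intro i
        rw [hinner]
        show star (⇑(u i)) ⬝ᵥ (A *ᵥ x j) = _
        rw [dotProduct_mulVec]
        have h1 : star (⇑(u i)) ᵥ* A = ((lam i : ℝ) : ℂ) • star (⇑(u i)) := by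
          have h2 : star (A *ᵥ ⇑(u i)) = star (⇑(u i)) ᵥ* Aᴴ := star_mulVec A _
          rw [hA.eq] at h2
          rw [← h2, hAu]
          ext t
          simp [mul_comm]
        rw [h1, smul_dotProduct, smul_eq_mul]
        rw [hinner]; rfl
      have hmain : star (x j) ⬝ᵥ A *ᵥ x j
          = (inner ℂ (x' j) ((WithLp.equiv 2 (Fin n → ℂ)).symm (A *ᵥ x j)) : ℂ) := by
        rw [hinner]; rfl
      rw [hmain, ← OrthonormalBasis.sum_inner_mul_inner u]
      refine Finset.sum_congr rfl fun i _ => ?_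
      rw [hmid i]
      have e1 : (inner ℂ (x' j) (u i) : ℂ) = (starRingEnd ℂ) (inner ℂ (u i) (x' j) : ℂ) :=
        (inner_conj_symm (x' j) (u i)).symm
      rw [e1, mul_left_comm, RCLike.conj_mul]
      rfl
    -- s = ∑ i, lam i * c i
    have hsval : s = ∑ i, lam i * c i := by
      have h1 : (s : ℂ) = ∑ i, ((lam i : ℝ) : ℂ) * ((c i : ℝ) : ℂ) := by
        rw [hs, Finset.sum_congr rfl fun j (_ : j ∈ Finset.univ) => hform j, Finset.sum_comm]
        refine Finset.sum_congr rfl fun i _ => ?_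
        simp only [hc]
        push_cast
        rw [Finset.mul_sum]
      have h2 : ((∑ i, lam i * c i : ℝ) : ℂ) = ∑ i, ((lam i : ℝ) : ℂ) * ((c i : ℝ) : ℂ) := by
        push_cast; rfl
      exact Complex.ofReal_injective (h1.trans h2.symm)
    rw [hsval]
    apply key_ineq lam c hlam _ _ _ hk1 hkn
    · intro i
      simp only [hc]
      exact Finset.sum_nonneg fun j _ => sq_nonneg _
    · -- Bessel
      intro i
      have hb := Orthonormal.sum_inner_products_le (𝕜 := ℂ) (u i) (s := Finset.univ) hx'on
      have hnorm : ‖(u i : EuclideanSpace ℂ (Fin n))‖ = 1 := u.orthonormal.1 i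
      calc c i = ∑ j, ‖(inner ℂ (x' j) (u i) : ℂ)‖ ^ 2 := by
            simp only [hc]
            exact Finset.sum_congr rfl fun j _ => by rw [norm_inner_symm]
        _ ≤ ‖(u i : EuclideanSpace ℂ (Fin n))‖ ^ 2 := hb
        _ = 1 := by rw [hnorm]; norm_num
    · -- Parseval
      have hone : ∀ j : Fin k, ∑ i, ‖(inner ℂ (u i) (x' j) : ℂ)‖ ^ 2 = 1 := by
        intro j
        have h1 : ∑ i, (inner ℂ (x' j) (u i) : ℂ) * inner ℂ (u i) (x' j) = inner ℂ (x' j) (x' j) :=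
          OrthonormalBasis.sum_inner_mul_inner u (x' j) (x' j)
        have h2 : (inner ℂ (x' j) (x' j) : ℂ) = 1 := by
          rw [hinner, hx'coe, hx j j]; simp
        have h3 : ∑ i, (((‖(inner ℂ (u i) (x' j) : ℂ)‖ : ℝ) : ℂ)) ^ 2 = 1 := by
          rw [← h2, ← h1]
          refine Finset.sum_congr rfl fun i _ => ?_
          have e1 : (inner ℂ (x' j) (u i) : ℂ) = (starRingEnd ℂ) (inner ℂ (u i) (x' j) : ℂ) :=
            (inner_conj_symm (x' j) (u i)).symm
          rw [e1, RCLike.conj_mul]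
          norm_cast
        have h4 : ((∑ i, ‖(inner ℂ (u i) (x' j) : ℂ)‖ ^ 2 : ℝ) : ℂ)
            = ∑ i, (((‖(inner ℂ (u i) (x' j) : ℂ)‖ : ℝ) : ℂ)) ^ 2 := by
          push_cast; rfl
        exact Complex.ofReal_injective (h4.trans h3)
      have hswap : ∑ i, c i = ∑ j : Fin k, ∑ i, ‖(inner ℂ (u i) (x' j) : ℂ)‖ ^ 2 := by
        simp only [hc]
        rw [Finset.sum_comm]
      rw [hswap, Finset.sum_congr rfl fun j (_ : j ∈ Finset.univ) => hone j]
      simp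
end

section
/- Let $\rho_{AB}$ be a Hermitian matrix on $\mathbb{C}^{d_A} \otimes \mathbb{C}^{d_B}$ (equivalently, a Hermitian matrix indexed by pairs $(i,j)$ with $1 \leq i \leq d_A$, $1 \leq j \leq d_B$) with nonincreasing spectrum $\lambda \in \mathbb{R}^{d_A d_B}$, and let $\rho_A = \mathrm{Tr}_B(\rho_{AB})$ be its partial trace, with nonincreasing spectrum $\tilde{\lambda} \in \mathbb{R}^{d_A}$. Then for every $k \in \{1, \ldots, d_A\}$ the inequality $\sum_{i=1}^k \tilde{\lambda}_i \leq \sum_{i=1}^{d_B k} \lambda_i$ holds; together with the trace equality $\sum_{i=1}^{d_A} \tilde{\lambda}_i = \sum_{i=1}^{d_A d_B} \lambda_i$, these inequalities say $\tilde{\lambda} \prec \Sigma_{d_B}(\lambda)$. -/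
open Matrix Polynomial

/-- The partial trace over the second factor:
`(Tr_B ρ)^{ik} = ∑_j ρ^{ij,kj}`. -/
noncomputable def partialTraceB {dA dB : ℕ}
    (ρ : Matrix (Fin dA × Fin dB) (Fin dA × Fin dB) ℂ) : Matrix (Fin dA) (Fin dA) ℂ :=
  fun i k => ∑ j : Fin dB, ρ (i, j) (k, j)

section helpers
open scoped ComplexOrder

lemma card_fiber_eq_count {α γ : Type*} [Fintype α] [DecidableEq γ] (u : α → γ) (v : γ) :
    Fintype.card {a // u a = v} = Multiset.count v (Finset.univ.val.map u) := by
  rw [Multiset.count_map, Fintype.card_subtype, Finset.card, Finset.filter_val]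
  congr 1
  exact Multiset.filter_congr (fun a _ => eq_comm)

lemma exists_equiv_comp {α β γ : Type*} [Fintype α] [Fintype β] [DecidableEq γ]
    (f : α → γ) (g : β → γ)
    (h : Finset.univ.val.map f = Finset.univ.val.map g) :
    ∃ e : α ≃ β, ∀ a, f a = g (e a) := by
  classical
  have hcount : ∀ v : γ, Fintype.card {a // f a = v} = Fintype.card {b // g b = v} := by
    intro v
    rw [card_fiber_eq_count, card_fiber_eq_count, h]
  let e1 : ∀ v : γ, {a // f a = v} ≃ {b // g b = v} := fun v => Fintype.equivOfCardEq (hcount v)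
  refine ⟨(Equiv.sigmaFiberEquiv f).symm.trans
    ((Equiv.sigmaCongrRight e1).trans (Equiv.sigmaFiberEquiv g)), fun a => ?_⟩
  exact ((e1 (f a)) ⟨a, rfl⟩).2.symm

lemma psum_all {N : ℕ} (v : Fin N → ℝ) {k : ℕ} (hk : N ≤ k) : psum v k = ∑ i, v i := by
  unfold psum
  congr 1
  apply Finset.filter_true_of_mem
  intro i _
  exact lt_of_lt_of_le i.2 hk

lemma card_filter_lt {N : ℕ} {m : ℕ} (hm : m ≤ N) :
    (Finset.univ.filter (fun i : Fin N => (i : ℕ) < m)).card = m := by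
  have : (Finset.univ.filter (fun i : Fin N => (i : ℕ) < m)) =
      (Finset.range m).attachFin (fun x hx => lt_of_lt_of_le (Finset.mem_range.mp hx) hm) := by
    ext i
    simp [Finset.mem_attachFin]
  rw [this, Finset.card_attachFin, Finset.card_range]

lemma maj_abstract {N : ℕ} (lam : Fin N → ℝ) (hlam : Antitone lam)
    (c : Fin N → ℝ) (h0 : ∀ i, 0 ≤ c i) (h1 : ∀ i, c i ≤ 1)
    (m : ℕ) (hsum : ∑ i, c i = m) :
    ∑ i, lam i * c i ≤ psum lam m := by
  rcases lt_or_ge m N with hm | hm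
  · set t : ℝ := lam ⟨m, hm⟩ with ht
    have key : ∀ i : Fin N, (lam i - t) * c i ≤ (lam i - t) * (if (i : ℕ) < m then 1 else 0) := by
      intro i
      by_cases hi : (i : ℕ) < m
      · rw [if_pos hi, mul_one]
        have hlt : lam i - t ≥ 0 := by
          have := hlam (show (⟨m, hm⟩ : Fin N) ≥ i from le_of_lt hi)
          linarith
        nlinarith [h1 i]
      · rw [if_neg hi, mul_zero]
        have hlt : lam i - t ≤ 0 := by
          have := hlam (show i ≥ (⟨m, hm⟩ : Fin N) from not_lt.mp hi)
          linarith
        nlinarith [h0 i]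
    have hs : ∑ i, (lam i - t) * c i ≤ ∑ i, (lam i - t) * (if (i : ℕ) < m then 1 else 0) :=
      Finset.sum_le_sum (fun i _ => key i)
    have e1 : ∑ i, (lam i - t) * c i = ∑ i, lam i * c i - t * m := by
      rw [← hsum]
      rw [Finset.mul_sum, ← Finset.sum_sub_distrib]
      congr 1; ext i; ring
    have e2 : ∑ i, (lam i - t) * (if (i : ℕ) < m then 1 else 0)
        = psum lam m - t * m := by
      have e3 : ∑ i, (lam i - t) * (if (i : ℕ) < m then (1:ℝ) else 0)
          = ∑ i ∈ Finset.univ.filter (fun i : Fin N => (i:ℕ) < m), (lam i - t) := by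
        rw [Finset.sum_filter]
        congr 1; ext i
        by_cases h : (i:ℕ) < m <;> simp [h]
      rw [e3, Finset.sum_sub_distrib, Finset.sum_const, card_filter_lt (le_of_lt hm)]
      unfold psum
      simp
      ring
    rw [e1, e2] at hs
    linarith
  · have hceq : ∀ i, c i = 1 := by
      have hNm : (N : ℝ) ≤ m := by exact_mod_cast hm
      have hsum2 : ∑ i : Fin N, (1 - c i) = N - m := by
        rw [Finset.sum_sub_distrib, hsum]; simp
      have hle : (0:ℝ) ≤ ∑ i : Fin N, (1 - c i) :=
        Finset.sum_nonneg (fun i _ => by linarith [h1 i])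
      have hzero : ∑ i : Fin N, (1 - c i) = 0 := by
        have : (N:ℝ) - m ≤ 0 := by linarith
        linarith [hsum2]
      intro i
      have := (Finset.sum_eq_zero_iff_of_nonneg
        (fun i _ => by linarith [h1 i])).mp hzero i (Finset.mem_univ i)
      linarith
    rw [psum_all lam hm]
    apply le_of_eq
    congr 1; ext i; rw [hceq i, mul_one]

lemma charpoly_diagonal' {n : Type*} [Fintype n] [DecidableEq n] (d : n → ℂ) :
    (Matrix.diagonal d).charpoly = ∏ i, (X - C (d i)) := by
  rw [Matrix.charpoly]
  have : charmatrix (Matrix.diagonal d) = Matrix.diagonal (fun i => (X:ℂ[X]) - C (d i)) := by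
    ext i j
    by_cases h : i = j
    · subst h; simp [Matrix.charmatrix_apply_eq]
    · simp [Matrix.charmatrix_apply_ne _ _ _ h, Matrix.diagonal_apply_ne _ h]
  rw [this, Matrix.det_diagonal]

lemma charpoly_conj_unitary {n : Type*} [Fintype n] [DecidableEq n]
    (U B : Matrix n n ℂ) (hU : U * Uᴴ = 1) :
    (U * B * Uᴴ).charpoly = B.charpoly := by
  set φ : Matrix n n ℂ →+* Matrix n n ℂ[X] := (C : ℂ →+* ℂ[X]).mapMatrix with hφ
  have hcm : charmatrix (U * B * Uᴴ) = (φ U) * charmatrix B * (φ Uᴴ) := by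
    unfold Matrix.charmatrix
    rw [Matrix.mul_sub, Matrix.sub_mul]
    congr 1
    · rw [((Matrix.scalar_commute (X : ℂ[X]) (Commute.all _) (φ U)).symm).eq]
      rw [Matrix.mul_assoc, ← _root_.map_mul φ, hU, _root_.map_one, Matrix.mul_one]
    · show φ (U * B * Uᴴ) = φ U * φ B * φ Uᴴ
      rw [_root_.map_mul, _root_.map_mul]
  rw [Matrix.charpoly, Matrix.charpoly, hcm, Matrix.det_mul, Matrix.det_mul]
  have hdet : (φ U).det * (φ Uᴴ).det = 1 := by
    rw [← Matrix.det_mul, ← _root_.map_mul φ, hU, _root_.map_one, Matrix.det_one]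
  calc (φ U).det * (charmatrix B).det * (φ Uᴴ).det
      = (φ U).det * (φ Uᴴ).det * (charmatrix B).det := by ring
    _ = (charmatrix B).det := by rw [hdet, one_mul]

lemma charpoly_hermitian_eq {n : Type*} [Fintype n] [DecidableEq n]
    {M : Matrix n n ℂ} (hM : M.IsHermitian) :
    M.charpoly = ∏ i, (X - C ((hM.eigenvalues i : ℝ) : ℂ)) := by
  have hU := (Matrix.mem_unitaryGroup_iff).mp (hM.eigenvectorUnitary).2
  have hst : star (hM.eigenvectorUnitary : Matrix n n ℂ)
      = (hM.eigenvectorUnitary : Matrix n n ℂ)ᴴ := rfl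
  conv_lhs => rw [hM.spectral_theorem, Unitary.conjStarAlgAut_apply]
  rw [hst] at hU ⊢
  rw [charpoly_conj_unitary _ _ hU, charpoly_diagonal']
  rfl

lemma roots_prod_X_sub_C' {δ : Type*} [Fintype δ] (u : δ → ℂ) :
    (∏ i, (X - C (u i))).roots = Finset.univ.val.map u := by
  rw [Finset.prod_eq_multiset_prod]
  have h : Multiset.map (fun i => X - C (u i)) Finset.univ.val
      = Multiset.map (fun a => X - C a) (Multiset.map u Finset.univ.val) := by
    rw [Multiset.map_map]; rfl
  rw [h, Polynomial.roots_multiset_prod_X_sub_C]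

lemma psd_diag_re_nonneg {n : Type*} [Fintype n] [DecidableEq n]
    {A : Matrix n n ℂ} (hA : A.PosSemidef) (j : n) : 0 ≤ (A j j).re := by
  have := hA.re_dotProduct_nonneg (Pi.single j 1)
  simpa [dotProduct, mulVec, Pi.single_apply, Finset.sum_ite_eq] using this

lemma partialTraceB_isHermitian {dA dB : ℕ}
    {ρ : Matrix (Fin dA × Fin dB) (Fin dA × Fin dB) ℂ} (h : ρ.IsHermitian) :
    (partialTraceB ρ).IsHermitian := by
  have happ : ∀ p q, ρ q p = star (ρ p q) := fun p q => (Matrix.IsHermitian.apply h q p).symm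
  ext i k
  rw [Matrix.conjTranspose_apply, partialTraceB, partialTraceB]
  rw [star_sum]
  exact Finset.sum_congr rfl (fun j _ => (happ _ _).symm)

lemma trace_partialTraceB {dA dB : ℕ}
    (ρ : Matrix (Fin dA × Fin dB) (Fin dA × Fin dB) ℂ) :
    (partialTraceB ρ).trace = ρ.trace := by
  rw [Matrix.trace, Matrix.trace, Fintype.sum_prod_type]
  rfl

lemma trace_eq_sum_spec {n : Type*} [Fintype n] [DecidableEq n] {N : ℕ}
    {M : Matrix n n ℂ} {lam : Fin N → ℝ}
    (hspec : M.charpoly = ∏ i, (X - C (lam i : ℂ))) :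
    M.trace = ((∑ i, lam i : ℝ) : ℂ) := by
  rw [Matrix.trace_eq_sum_roots_charpoly, hspec, roots_prod_X_sub_C']
  rw [Finset.sum_eq_multiset_sum]
  calc (Multiset.map (fun i => ((lam i:ℝ) : ℂ)) Finset.univ.val).sum
      = (Multiset.map (⇑Complex.ofRealHom ∘ lam) Finset.univ.val).sum := rfl
    _ = (Multiset.map (⇑Complex.ofRealHom) (Multiset.map lam Finset.univ.val)).sum := by
        rw [Multiset.map_map]
    _ = _ := by rw [← map_multiset_sum]; rfl

lemma trace_quadform_le {n : Type*} [Fintype n] [DecidableEq n] {N : ℕ}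
    {M : Matrix n n ℂ} (hM : M.IsHermitian) (lam : Fin N → ℝ) (hlam : Antitone lam)
    (hspec : M.charpoly = ∏ i, (X - C (lam i : ℂ)))
    {ι : Type*} [Fintype ι] [DecidableEq ι] (W : Matrix n ι ℂ) (hW : Wᴴ * W = 1) :
    ((Wᴴ * M * W).trace).re ≤ psum lam (Fintype.card ι) := by
  classical
  set μ : n → ℝ := hM.eigenvalues with hμ
  set U : Matrix n n ℂ := (hM.eigenvectorUnitary : Matrix n n ℂ) with hUdef
  have hU : U * Uᴴ = 1 := (Matrix.mem_unitaryGroup_iff).mp (hM.eigenvectorUnitary).2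
  have hU2 : Uᴴ * U = 1 := (Matrix.mem_unitaryGroup_iff').mp (hM.eigenvectorUnitary).2
  have hmeq : Finset.univ.val.map (fun j : n => ((μ j : ℝ) : ℂ))
      = Finset.univ.val.map (fun i : Fin N => ((lam i : ℝ) : ℂ)) := by
    rw [← roots_prod_X_sub_C' (fun j : n => ((μ j : ℝ) : ℂ)),
        ← roots_prod_X_sub_C' (fun i : Fin N => ((lam i : ℝ) : ℂ)),
        ← charpoly_hermitian_eq hM, hspec]
  obtain ⟨e, he⟩ := exists_equiv_comp _ _ hmeq
  have he' : ∀ j : n, μ j = lam (e j) := fun j => by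
    have := he j; exact_mod_cast this
  set B : Matrix n n ℂ := Uᴴ * W * Wᴴ * U with hB
  set c : n → ℝ := fun j => (B j j).re with hc
  have hBpsd : B.PosSemidef := by
    have hBeq : B = (Uᴴ * W) * (Uᴴ * W)ᴴ := by
      rw [Matrix.conjTranspose_mul, Matrix.conjTranspose_conjTranspose, hB, Matrix.mul_assoc,
        Matrix.mul_assoc]
    rw [hBeq]
    exact Matrix.posSemidef_self_mul_conjTranspose _
  have hc0 : ∀ j, 0 ≤ c j := fun j => psd_diag_re_nonneg hBpsd j
  have hc1 : ∀ j, c j ≤ 1 := by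
    intro j
    have hpsd2 : (1 - B).PosSemidef := by
      have hproj : (1 - W * Wᴴ) * (1 - W * Wᴴ) = 1 - W * Wᴴ := by
        have hPP : (W * Wᴴ) * (W * Wᴴ) = W * Wᴴ := by
          calc (W * Wᴴ) * (W * Wᴴ) = W * (Wᴴ * W * Wᴴ) := by simp [Matrix.mul_assoc]
            _ = W * Wᴴ := by rw [hW, Matrix.one_mul]
        simp only [Matrix.sub_mul, Matrix.mul_sub, hPP, Matrix.one_mul, Matrix.mul_one]
        abel
      have hherm : (1 - W * Wᴴ)ᴴ = 1 - W * Wᴴ := by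
        rw [Matrix.conjTranspose_sub, Matrix.conjTranspose_one, Matrix.conjTranspose_mul,
          Matrix.conjTranspose_conjTranspose]
      have h1B : 1 - B = (Uᴴ * (1 - W * Wᴴ)) * (Uᴴ * (1 - W * Wᴴ))ᴴ := by
        calc 1 - B = Uᴴ * U - Uᴴ * (W * Wᴴ) * U := by
              rw [hU2, hB]; simp [Matrix.mul_assoc]
          _ = Uᴴ * ((1 - W * Wᴴ) * (1 - W * Wᴴ)) * U := by
              rw [hproj, Matrix.mul_sub, Matrix.mul_one, Matrix.sub_mul]
          _ = Uᴴ * (1 - W * Wᴴ) * ((1 - W * Wᴴ)ᴴ * U) := by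
              rw [hherm]; simp [Matrix.mul_assoc]
          _ = (Uᴴ * (1 - W * Wᴴ)) * (Uᴴ * (1 - W * Wᴴ))ᴴ := by
              rw [Matrix.conjTranspose_mul, Matrix.conjTranspose_conjTranspose, Matrix.mul_assoc]
      rw [h1B]
      exact Matrix.posSemidef_self_mul_conjTranspose _
    have hd := psd_diag_re_nonneg hpsd2 j
    have h1 : ((1 : Matrix n n ℂ) - B) j j = 1 - B j j := by simp [Matrix.one_apply]
    rw [h1] at hd
    simp only [Complex.sub_re, Complex.one_re] at hd
    simpa [hc] using by linarith
  have hcsum : ∑ j, c j = (Fintype.card ι : ℝ) := by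
    have htr : B.trace = (Fintype.card ι : ℂ) := by
      calc B.trace = ((Uᴴ * W * Wᴴ) * U).trace := by rw [hB]
        _ = (U * (Uᴴ * W * Wᴴ)).trace := Matrix.trace_mul_comm _ _
        _ = ((U * Uᴴ) * (W * Wᴴ)).trace := by congr 1; simp [Matrix.mul_assoc]
        _ = (W * Wᴴ).trace := by rw [hU, Matrix.one_mul]
        _ = (Wᴴ * W).trace := Matrix.trace_mul_comm _ _
        _ = (1 : Matrix ι ι ℂ).trace := by rw [hW]
        _ = (Fintype.card ι : ℂ) := by simp [Matrix.trace_one]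
    have hre : (B.trace).re = (Fintype.card ι : ℝ) := by rw [htr]; simp
    rw [← hre, Matrix.trace, Complex.re_sum]
    rfl
  have htrace : ((Wᴴ * M * W).trace).re = ∑ j, μ j * c j := by
    have hMeq : M = U * Matrix.diagonal (RCLike.ofReal ∘ μ) * Uᴴ := hM.spectral_theorem
    have h1 : Wᴴ * M * W = (Wᴴ * U * (Matrix.diagonal (RCLike.ofReal ∘ μ) : Matrix n n ℂ)) * (Uᴴ * W) := by
      rw [hMeq]; simp [Matrix.mul_assoc]
    rw [h1, Matrix.trace_mul_comm]
    have h2 : Uᴴ * W * (Wᴴ * U * (Matrix.diagonal (RCLike.ofReal ∘ μ) : Matrix n n ℂ))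
        = B * Matrix.diagonal (RCLike.ofReal ∘ μ) := by
      rw [hB]; simp [Matrix.mul_assoc]
    rw [h2, Matrix.trace, Complex.re_sum]
    apply Finset.sum_congr rfl
    intro j _
    rw [Matrix.diag_apply, Matrix.mul_diagonal]
    simp [Complex.mul_re, hc, mul_comm]
  rw [htrace]
  have hswap : ∑ j, μ j * c j = ∑ i : Fin N, lam i * c (e.symm i) := by
    rw [← Equiv.sum_comp e (fun i => lam i * c (e.symm i))]
    apply Finset.sum_congr rfl
    intro j _
    rw [Equiv.symm_apply_apply, he' j]
  rw [hswap]
  apply maj_abstract lam hlam _ (fun i => hc0 _) (fun i => hc1 _)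
  rw [← Equiv.sum_comp e.symm c] at hcsum
  exact hcsum

end helpers


/-- The basic inequalities relating the spectrum `λ` of a Hermitian matrix `ρ_{AB}` and the
spectrum `λ̃` of its partial trace `ρ_A`: for every `1 ≤ k ≤ d_A`,
`∑_{i=1}^k λ̃_i ≤ ∑_{i=1}^{d_B k} λ_i`, together with the trace equality; i.e.
`λ̃ ≺ Σ_{d_B}(λ)`. -/
theorem partialTrace_basic_inequalities {dA dB : ℕ}
    (ρAB : Matrix (Fin dA × Fin dB) (Fin dA × Fin dB) ℂ) (hherm : ρAB.IsHermitian)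
    (lam : Fin (dA * dB) → ℝ) (hlam : Antitone lam) (hspec : HasSpectrum ρAB lam)
    (tlam : Fin dA → ℝ) (htlam : Antitone tlam)
    (htspec : HasSpectrum (partialTraceB ρAB) tlam) :
    (∀ k : ℕ, 1 ≤ k → k ≤ dA → psum tlam k ≤ psum lam (dB * k)) ∧
      psum tlam dA = psum lam (dA * dB) := by
  classical
  have hspec' : ρAB.charpoly = ∏ i, (X - C (lam i : ℂ)) := hspec
  have htspec' : (partialTraceB ρAB).charpoly = ∏ i, (X - C (tlam i : ℂ)) := htspec
  have hAherm : (partialTraceB ρAB).IsHermitian := partialTraceB_isHermitian hherm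
  constructor
  · intro k hk1 hk2
    set τ : Fin dA → ℝ := hAherm.eigenvalues with hτ
    have hmeq : Finset.univ.val.map (fun i : Fin dA => ((tlam i : ℝ) : ℂ))
        = Finset.univ.val.map (fun j : Fin dA => ((τ j : ℝ) : ℂ)) := by
      rw [← roots_prod_X_sub_C' (fun i : Fin dA => ((tlam i : ℝ) : ℂ)),
          ← roots_prod_X_sub_C' (fun j : Fin dA => ((τ j : ℝ) : ℂ)),
          ← htspec', ← charpoly_hermitian_eq hAherm]
    obtain ⟨e, he⟩ := exists_equiv_comp _ _ hmeq
    have he' : ∀ i, tlam i = τ (e i) := fun i => by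
      have := he i; exact_mod_cast this
    set V : Matrix (Fin dA) (Fin dA) ℂ :=
      (hAherm.eigenvectorUnitary : Matrix (Fin dA) (Fin dA) ℂ) with hV
    have hVV : Vᴴ * V = 1 := (Matrix.mem_unitaryGroup_iff').mp (hAherm.eigenvectorUnitary).2
    have hdiag : Vᴴ * (partialTraceB ρAB) * V = Matrix.diagonal (RCLike.ofReal ∘ τ) :=
      by have := hAherm.conjStarAlgAut_star_eigenvectorUnitary
         rw [Unitary.conjStarAlgAut_apply, Unitary.coe_star, star_star] at this
         exact this
    set S : Finset (Fin dA) := (Finset.univ.filter (fun i : Fin dA => (i : ℕ) < k)).image e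
      with hS
    have hcardS : S.card = k := by
      rw [hS, Finset.card_image_of_injective _ e.injective, card_filter_lt hk2]
    set W : Matrix (Fin dA × Fin dB) (↥S × Fin dB) ℂ :=
      fun p q => V p.1 ↑q.1 * (if p.2 = q.2 then 1 else 0) with hWdef
    have hcol : ∀ a a' : Fin dA, (∑ i, (starRingEnd ℂ) (V i a) * V i a')
        = if a = a' then 1 else 0 := by
      intro a a'
      have h := congrFun (congrFun hVV a) a'
      rw [Matrix.mul_apply] at h
      simp only [Matrix.conjTranspose_apply, Matrix.one_apply] at h
      exact h
    have hW : Wᴴ * W = 1 := by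
      ext q q'
      rw [Matrix.mul_apply]
      have hterm : ∀ p : Fin dA × Fin dB, Wᴴ q p * W p q'
          = ((starRingEnd ℂ) (V p.1 ↑q.1) * V p.1 ↑q'.1) *
            ((if p.2 = q.2 then 1 else 0) * (if p.2 = q'.2 then 1 else 0)) := by
        intro p
        rw [Matrix.conjTranspose_apply, hWdef]
        by_cases h : p.2 = q.2 <;> by_cases h' : p.2 = q'.2 <;>
          simp [h, h', mul_comm, apply_ite (starRingEnd ℂ)]
      rw [Finset.sum_congr rfl (fun p _ => hterm p), Fintype.sum_prod_type]
      have hb : ∀ i : Fin dA, ∑ b : Fin dB,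
            ((starRingEnd ℂ) (V i ↑q.1) * V i ↑q'.1) *
            ((if b = q.2 then (1:ℂ) else 0) * (if b = q'.2 then 1 else 0))
          = ((starRingEnd ℂ) (V i ↑q.1) * V i ↑q'.1) * (if q.2 = q'.2 then 1 else 0) := by
        intro i
        rw [← Finset.mul_sum]
        congr 1
        by_cases h : q.2 = q'.2
        · rw [if_pos h, ← h]
          have hbb : ∀ b : Fin dB, ((if b = q.2 then (1:ℂ) else 0) * (if b = q.2 then 1 else 0))
              = if b = q.2 then 1 else 0 := by
            intro b; by_cases hb : b = q.2 <;> simp [hb]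
          rw [Finset.sum_congr rfl fun b _ => hbb b]
          simp
        · rw [if_neg h]
          apply Finset.sum_eq_zero
          intro b _
          by_cases hb1 : b = q.2
          · have hb2 : ¬ b = q'.2 := fun hb2 => h (hb1.symm.trans hb2)
            simp [hb2]
          · simp [hb1]
      rw [Finset.sum_congr rfl (fun i _ => hb i), ← Finset.sum_mul, hcol]
      have hcoe : ((↑q.1 : Fin dA) = ↑q'.1) ↔ q.1 = q'.1 := Subtype.coe_injective.eq_iff
      rw [Matrix.one_apply]
      by_cases h1 : q.1 = q'.1 <;> by_cases h2 : q.2 = q'.2 <;>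
        simp [hcoe, h1, h2, Prod.ext_iff]
    have hcard : Fintype.card (↥S × Fin dB) = dB * k := by
      rw [Fintype.card_prod, Fintype.card_coe, hcardS, Fintype.card_fin, Nat.mul_comm]
    have hq := trace_quadform_le hherm lam hlam hspec' W hW
    rw [hcard] at hq
    -- now identify the left side
    have hentry : ∀ q : ↥S × Fin dB, (Wᴴ * ρAB * W) q q
        = ∑ i : Fin dA, ∑ i' : Fin dA,
            (starRingEnd ℂ) (V i ↑q.1) * ρAB (i, q.2) (i', q.2) * V i' ↑q.1 := by
      intro q
      rw [Matrix.mul_apply]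
      have hterm : ∀ p' : Fin dA × Fin dB, (Wᴴ * ρAB) q p' * W p' q
          = (∑ p : Fin dA × Fin dB, (starRingEnd ℂ) (W p q) * ρAB p p') * W p' q := by
        intro p'
        congr 1
        try rw [Matrix.mul_apply]
        try exact Finset.sum_congr rfl (fun p _ => by rw [Matrix.conjTranspose_apply])
      rw [Finset.sum_congr rfl (fun p' _ => hterm p'), Fintype.sum_prod_type]
      have hb' : ∀ i' : Fin dA, ∑ b' : Fin dB,
            (∑ p : Fin dA × Fin dB, (starRingEnd ℂ) (W p q) * ρAB p (i', b')) * W (i', b') q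
          = (∑ p : Fin dA × Fin dB, (starRingEnd ℂ) (W p q) * ρAB p (i', q.2)) * V i' ↑q.1 := by
        intro i'
        rw [Finset.sum_eq_single q.2]
        · rw [hWdef]; simp
        · intro b _ hbne
          rw [hWdef]; simp [hbne]
        · simp
      rw [Finset.sum_congr rfl (fun i' _ => hb' i')]
      have hp : ∀ i' : Fin dA, (∑ p : Fin dA × Fin dB, (starRingEnd ℂ) (W p q) * ρAB p (i', q.2))
          = ∑ i : Fin dA, (starRingEnd ℂ) (V i ↑q.1) * ρAB (i, q.2) (i', q.2) := by
        intro i'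
        rw [Fintype.sum_prod_type]
        apply Finset.sum_congr rfl
        intro i _
        rw [Finset.sum_eq_single q.2]
        · rw [hWdef]; simp
        · intro b _ hbne; rw [hWdef]; simp [hbne]
        · simp
      rw [Finset.sum_congr rfl (fun i' _ => by rw [hp i'])]
      have hdist : ∑ i' : Fin dA,
            (∑ i : Fin dA, (starRingEnd ℂ) (V i ↑q.1) * ρAB (i, q.2) (i', q.2)) * V i' ↑q.1
          = ∑ i' : Fin dA, ∑ i : Fin dA,
            (starRingEnd ℂ) (V i ↑q.1) * ρAB (i, q.2) (i', q.2) * V i' ↑q.1 := by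
        apply Finset.sum_congr rfl
        intro i' _
        rw [Finset.sum_mul]
      rw [hdist, Finset.sum_comm]
    have htr : ((Wᴴ * ρAB * W).trace).re = psum tlam k := by
      have h1 : (Wᴴ * ρAB * W).trace
          = ∑ j : ↥S, ((Vᴴ * (partialTraceB ρAB) * V) ↑j ↑j) := by
        rw [Matrix.trace, Fintype.sum_prod_type]
        simp only [Matrix.diag_apply]
        apply Finset.sum_congr rfl
        intro j _
        rw [Finset.sum_congr rfl (fun b _ => hentry (j, b))]
        have hR : (Vᴴ * (partialTraceB ρAB) * V) ↑j ↑j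
            = ∑ i : Fin dA, ∑ i' : Fin dA,
              (starRingEnd ℂ) (V i ↑j) * (partialTraceB ρAB) i i' * V i' ↑j := by
          rw [Matrix.mul_apply]
          rw [Finset.sum_congr rfl
            (fun i' _ => by rw [Matrix.mul_apply, Finset.sum_mul] :
              ∀ i' ∈ Finset.univ, (Vᴴ * partialTraceB ρAB) (↑j) i' * V i' ↑j
                = ∑ i : Fin dA, Vᴴ ↑j i * (partialTraceB ρAB) i i' * V i' ↑j)]
          rw [Finset.sum_comm]
          apply Finset.sum_congr rfl
          intro i _
          apply Finset.sum_congr rfl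
          intro i' _
          rw [Matrix.conjTranspose_apply]
          rfl
        rw [hR, Finset.sum_comm]
        apply Finset.sum_congr rfl
        intro i _
        rw [Finset.sum_comm]
        apply Finset.sum_congr rfl
        intro i' _
        show ∑ b : Fin dB, (starRingEnd ℂ) (V i ↑j) * ρAB (i, b) (i', b) * V i' ↑j
            = (starRingEnd ℂ) (V i ↑j) * partialTraceB ρAB i i' * V i' ↑j
        rw [← Finset.sum_mul, ← Finset.mul_sum]
        rfl
      rw [h1, hdiag, Complex.re_sum]
      have h2 : ∑ j : ↥S, ((Matrix.diagonal (RCLike.ofReal ∘ τ) : Matrix (Fin dA) (Fin dA) ℂ)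
            ↑j ↑j).re = ∑ j : ↥S, τ ↑j := by
        apply Finset.sum_congr rfl
        intro j _
        rw [Matrix.diagonal_apply_eq]
        simp [RCLike.ofReal]
      rw [h2]
      have h3 : ∑ j : ↥S, τ ↑j = ∑ j ∈ S, τ j := Finset.sum_coe_sort S τ
      rw [h3, hS, Finset.sum_image (fun x _ y _ hxy => e.injective hxy)]
      unfold psum
      exact Finset.sum_congr rfl (fun i _ => (he' i).symm)
    rw [htr] at hq
    exact hq
  · have h1 : ((∑ i, tlam i : ℝ) : ℂ) = ((∑ i, lam i : ℝ) : ℂ) := by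
      rw [← trace_eq_sum_spec htspec', ← trace_eq_sum_spec hspec', trace_partialTraceB]
    have h2 : (∑ i, tlam i) = ∑ i, lam i := by exact_mod_cast h1
    rw [psum_all tlam (le_refl dA), psum_all lam (le_refl _), h2]
end

section
/- (Hersch–Zwahlen variational principle) Let $A$ be an $n \times n$ Hermitian matrix with eigenvalues $\lambda_1 \geq \cdots \geq \lambda_n$, and for each $r$ let $A_r \leq \mathbb{C}^n$ be the $r$-dimensional subspace spanned by eigenvectors of $A$ corresponding to the eigenvalues $\lambda_1, \ldots, \lambda_r$ (with $A_0 = 0$), so that $A_0 \subset A_1 \subset \cdots \subset A_n = \mathbb{C}^n$ is a complete flag of $A$-invariant subspaces. Let $\pi \in \{0,1\}^n$ be a binary sequence of weight $r$, and let $S_\pi(A) = \{ V \leq \mathbb{C}^n : \dim(V \cap A_i) - \dim(V \cap A_{i-1}) = \pi(i) \text{ for } 1 \leq i \leq n \}$. Then $\min_{V \in S_\pi(A)} \mathrm{Tr}(P_V A) = \sum_{i=1}^n \pi(i) \lambda_i$, and the minimum is attained when $V$ is the span of eigenvectors corresponding to the eigenvalues $\lambda_i$ with $\pi(i) = 1$.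 -/
open Module Submodule

noncomputable section

/-- The Rayleigh trace `R_A(V) = Tr(P_V A)` of a matrix `A` on a subspace `V ≤ ℂⁿ`,
where `P_V` is the orthogonal projection onto `V`. -/
def rayleighTrace {n : ℕ} (A : Matrix (Fin n) (Fin n) ℂ)
    (V : Submodule ℂ (EuclideanSpace ℂ (Fin n))) : ℝ :=
  (LinearMap.trace ℂ (EuclideanSpace ℂ (Fin n))
    ((V.subtypeL.comp (orthogonalProjection V)).toLinearMap ∘ₗ
      Matrix.toEuclideanLin A)).re

/-- The subspace spanned by the first `i` vectors of the family `v`. -/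
def flagOf {ι : Type*} [Fintype ι] {N : ℕ} (v : Fin N → EuclideanSpace ℂ ι) (i : ℕ) :
    Submodule ℂ (EuclideanSpace ℂ ι) :=
  Submodule.span ℂ (v '' {j | (j : ℕ) < i})

/-- The Schubert cell `S_π` attached to the flag spanned by the family `v`: the subspaces
`V` with `dim (V ⊓ A_i) - dim (V ⊓ A_{i-1}) = π(i)` for all `i`, where `A_i` is the span
of the first `i` vectors of `v`. -/
def schubertCell {ι : Type*} [Fintype ι] {N : ℕ} (v : Fin N → EuclideanSpace ℂ ι)
    (π : Fin N → ℕ) : Set (Submodule ℂ (EuclideanSpace ℂ ι)) :=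
  {V | ∀ i : Fin N,
    finrank ℂ (V ⊓ flagOf v ((i : ℕ) + 1) : Submodule ℂ (EuclideanSpace ℂ ι)) =
      finrank ℂ (V ⊓ flagOf v (i : ℕ) : Submodule ℂ (EuclideanSpace ℂ ι)) + π i}

open scoped InnerProductSpace

section Helpers

lemma trace_eq_sum_inner' {E : Type*} [NormedAddCommGroup E] [InnerProductSpace ℂ E]
    {ι : Type*} [Fintype ι] [DecidableEq ι] (b : OrthonormalBasis ι ℂ E) (f : E →ₗ[ℂ] E) :
    LinearMap.trace ℂ E f = ∑ i, ⟪b i, f (b i)⟫_ℂ := by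
  haveI := Module.Finite.of_basis b.toBasis
  rw [LinearMap.trace_eq_matrix_trace ℂ b.toBasis, Matrix.trace]
  simp [Matrix.diag, LinearMap.toMatrix_apply, OrthonormalBasis.coe_toBasis,
    OrthonormalBasis.coe_toBasis_repr_apply, OrthonormalBasis.repr_apply_apply]

lemma parseval' {E : Type*} [NormedAddCommGroup E] [InnerProductSpace ℂ E]
    {ι : Type*} [Fintype ι] (b : OrthonormalBasis ι ℂ E) (x : E) :
    ∑ i, ‖⟪b i, x⟫_ℂ‖ ^ 2 = ‖x‖ ^ 2 := by
  have h := b.sum_inner_mul_inner x x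
  have h2 : ∀ i, ⟪x, b i⟫_ℂ * ⟪b i, x⟫_ℂ = ((‖⟪b i, x⟫_ℂ‖ : ℂ) ^ 2) := by
    intro i
    rw [← inner_conj_symm x (b i), Complex.conj_mul']
  simp_rw [h2] at h
  rw [inner_self_eq_norm_sq_to_K] at h
  have h3 := congrArg Complex.re h
  simp only [Complex.re_sum, Complex.ofReal_re] at h3
  exact_mod_cast h3

lemma proj_normsq' {E : Type*} [NormedAddCommGroup E] [InnerProductSpace ℂ E]
    {ι : Type*} [Fintype ι] (V : Submodule ℂ E) [CompleteSpace V]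
    (b : OrthonormalBasis ι ℂ V) (x : E) :
    ‖(orthogonalProjection V x : E)‖ ^ 2 = ∑ j, ‖⟪(b j : E), x⟫_ℂ‖ ^ 2 := by
  have h := parseval' b (orthogonalProjection V x)
  rw [← Submodule.norm_coe (orthogonalProjection V x)] at h
  simp only [inner_orthogonalProjection_eq_of_mem_left] at h
  exact h.symm

lemma abel_aux (L D : ℕ → ℝ) (hL : Antitone L) :
    ∀ N, (∀ k, k ≤ N → 0 ≤ ∑ i ∈ Finset.range k, D i) →
      L (N - 1) * (∑ i ∈ Finset.range N, D i) ≤ ∑ i ∈ Finset.range N, L i * D i := by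
  intro N
  induction N with
  | zero => intro _; simp
  | succ N ih =>
    intro hS
    have h1 := ih (fun k hk => hS k (hk.trans (Nat.le_succ N)))
    have hSN := hS N (Nat.le_succ N)
    have h2 : L N * ∑ i ∈ Finset.range N, D i ≤ L (N-1) * ∑ i ∈ Finset.range N, D i :=
      mul_le_mul_of_nonneg_right (hL (Nat.sub_le N 1)) hSN
    rw [Finset.sum_range_succ, Finset.sum_range_succ, Nat.succ_sub_one, mul_add]
    exact add_le_add (h2.trans h1) le_rfl

lemma basis_span_inf {E : Type*} [AddCommGroup E] [Module ℂ E] {ι : Type*}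
    (b : Basis ι ℂ E) (s t : Set ι) :
    Submodule.span ℂ (b '' s) ⊓ Submodule.span ℂ (b '' t) = Submodule.span ℂ (b '' (s ∩ t)) := by
  ext x
  simp [Submodule.mem_inf, Basis.mem_span_image, Set.subset_inter_iff]

lemma finrank_span_basis_image {E : Type*} [AddCommGroup E] [Module ℂ E] {ι : Type*} [Fintype ι]
    (b : Basis ι ℂ E) (s : Set ι) :
    finrank ℂ (Submodule.span ℂ (b '' s)) = s.ncard := by
  classical
  rw [Set.image_eq_range]
  have h : (fun x : s => b (x : ι)) = b ∘ Subtype.val := rfl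
  rw [h, finrank_span_eq_card (b.linearIndependent.comp _ Subtype.val_injective),
    ← Nat.card_coe_set_eq, Nat.card_eq_fintype_card]

lemma mem_orthogonal_span' {E : Type*} [NormedAddCommGroup E] [InnerProductSpace ℂ E]
    {s : Set E} {x : E} (h : ∀ y ∈ s, ⟪x, y⟫_ℂ = 0) : x ∈ (Submodule.span ℂ s)ᗮ := by
  rw [Submodule.mem_orthogonal']
  intro u hu
  induction hu using Submodule.span_induction with
  | mem y hy => exact h y hy
  | zero => exact inner_zero_right x
  | add y z _ _ hy hz => rw [inner_add_right, hy, hz, add_zero]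
  | smul c y _ hy => rw [inner_smul_right, hy, mul_zero]

lemma inner_proj_self {E : Type*} [NormedAddCommGroup E] [InnerProductSpace ℂ E]
    (V : Submodule ℂ E) [HasOrthogonalProjection V] (x : E) :
    ⟪x, (orthogonalProjection V x : E)⟫_ℂ = ((‖(orthogonalProjection V x : E)‖ : ℂ)) ^ 2 := by
  have h0 : ⟪x - (orthogonalProjection V x : E), (orthogonalProjection V x : E)⟫_ℂ = 0 :=
    inner_left_of_mem_orthogonal (SetLike.coe_mem _) (Submodule.sub_starProjection_mem_orthogonal (K := V) x)
  rw [inner_sub_left, sub_eq_zero] at h0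
  rw [h0, inner_self_eq_norm_sq_to_K]
  norm_cast

lemma norm_proj_le' {E : Type*} [NormedAddCommGroup E] [InnerProductSpace ℂ E]
    (U : Submodule ℂ E) [HasOrthogonalProjection U] (y : E) :
    ‖(orthogonalProjection U y : E)‖ ≤ ‖y‖ := by
  calc ‖(orthogonalProjection U y : E)‖ = ‖orthogonalProjection U y‖ := rfl
    _ ≤ ‖orthogonalProjection U‖ * ‖y‖ := (orthogonalProjection U).le_opNorm y
    _ ≤ 1 * ‖y‖ :=
        mul_le_mul_of_nonneg_right (orthogonalProjection_norm_le U) (norm_nonneg y)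
    _ = ‖y‖ := one_mul _

lemma filter_succ_sum {M : Type*} [AddCommMonoid M] {n k : ℕ} (hk : k < n) (f : Fin n → M) :
    ∑ i ∈ Finset.univ.filter (fun i : Fin n => (i:ℕ) < k + 1), f i =
      (∑ i ∈ Finset.univ.filter (fun i : Fin n => (i:ℕ) < k), f i) + f ⟨k, hk⟩ := by
  classical
  have h : Finset.univ.filter (fun i : Fin n => (i:ℕ) < k + 1) =
      insert ⟨k, hk⟩ (Finset.univ.filter (fun i : Fin n => (i:ℕ) < k)) := by
    ext j
    simp [Nat.lt_succ_iff_lt_or_eq, Fin.ext_iff, or_comm]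
    omega
  rw [h, Finset.sum_insert (by simp), add_comm]

lemma range_sum_eq_filter {n : ℕ} (f : Fin n → ℝ) :
    ∀ k, k ≤ n → ∑ i ∈ Finset.range k, (if h : i < n then f ⟨i, h⟩ else 0) =
      ∑ i ∈ Finset.univ.filter (fun i : Fin n => (i:ℕ) < k), f i := by
  intro k
  induction k with
  | zero => intro _; simp
  | succ k ih =>
    intro hk
    have hk' : k < n := hk
    rw [Finset.sum_range_succ, ih hk'.le, filter_succ_sum hk', dif_pos hk']

lemma rayleigh_formula {n : ℕ} (A : Matrix (Fin n) (Fin n) ℂ) (lam : Fin n → ℝ)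
    {v : Fin n → EuclideanSpace ℂ (Fin n)}
    (B : OrthonormalBasis (Fin n) ℂ (EuclideanSpace ℂ (Fin n))) (hB : ⇑B = v)
    (heig : ∀ i, Matrix.toEuclideanLin A (v i) = (lam i : ℂ) • v i)
    (V : Submodule ℂ (EuclideanSpace ℂ (Fin n))) :
    rayleighTrace A V =
      ∑ i, lam i * ‖(orthogonalProjection V (v i) : EuclideanSpace ℂ (Fin n))‖ ^ 2 := by
  classical
  rw [rayleighTrace, trace_eq_sum_inner' B, Complex.re_sum]
  refine Finset.sum_congr rfl fun i _ => ?_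
  rw [hB, LinearMap.comp_apply]
  simp only [ContinuousLinearMap.coe_coe, ContinuousLinearMap.comp_apply,
    Submodule.subtypeL_apply]
  rw [heig i, map_smul, Submodule.coe_smul, inner_smul_right, inner_proj_self,
    ← Complex.ofReal_pow, ← Complex.ofReal_mul, Complex.ofReal_re]

lemma proj_sum_ge {n : ℕ} {v : Fin n → EuclideanSpace ℂ (Fin n)}
    (B : OrthonormalBasis (Fin n) ℂ (EuclideanSpace ℂ (Fin n))) (hB : ⇑B = v)
    (V U : Submodule ℂ (EuclideanSpace ℂ (Fin n))) (hUV : U ≤ V) (k : ℕ)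
    (hUk : ∀ x ∈ U, ∀ i : Fin n, k ≤ (i : ℕ) → ⟪v i, x⟫_ℂ = 0) :
    (finrank ℂ U : ℝ) ≤ ∑ i ∈ Finset.univ.filter (fun i : Fin n => (i : ℕ) < k),
      ‖(orthogonalProjection V (v i) : EuclideanSpace ℂ (Fin n))‖ ^ 2 := by
  classical
  let u := stdOrthonormalBasis ℂ U
  have hukn : ∀ j, ‖((u j : U) : EuclideanSpace ℂ (Fin n))‖ = 1 := fun j => by
    rw [Submodule.norm_coe]; exact u.orthonormal.1 j
  have key : ∀ j, ∑ i ∈ Finset.univ.filter (fun i : Fin n => (i : ℕ) < k),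
      ‖⟪v i, ((u j : U) : EuclideanSpace ℂ (Fin n))⟫_ℂ‖ ^ 2 = 1 := by
    intro j
    have hp := parseval' B ((u j : U) : EuclideanSpace ℂ (Fin n))
    rw [hB] at hp
    rw [Finset.sum_filter_of_ne, hp, hukn j, one_pow]
    intro i _ hne
    by_contra hik
    exact hne (by rw [hUk _ (u j).2 i (le_of_not_gt hik)]; simp)
  calc (finrank ℂ U : ℝ)
      = ∑ _j : Fin (finrank ℂ U), (1:ℝ) := by simp
    _ = ∑ j, ∑ i ∈ Finset.univ.filter (fun i : Fin n => (i:ℕ) < k),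
          ‖⟪v i, ((u j : U) : EuclideanSpace ℂ (Fin n))⟫_ℂ‖ ^ 2 :=
        Finset.sum_congr rfl fun j _ => (key j).symm
    _ = ∑ i ∈ Finset.univ.filter (fun i : Fin n => (i:ℕ) < k),
          ∑ j, ‖⟪v i, ((u j : U) : EuclideanSpace ℂ (Fin n))⟫_ℂ‖ ^ 2 := Finset.sum_comm
    _ = ∑ i ∈ Finset.univ.filter (fun i : Fin n => (i:ℕ) < k),
          ‖(orthogonalProjection U (v i) : EuclideanSpace ℂ (Fin n))‖ ^ 2 := by
        refine Finset.sum_congr rfl fun i _ => ?_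
        rw [proj_normsq' U u (v i)]
        exact Finset.sum_congr rfl fun j _ => by rw [norm_inner_symm]
    _ ≤ ∑ i ∈ Finset.univ.filter (fun i : Fin n => (i:ℕ) < k),
          ‖(orthogonalProjection V (v i) : EuclideanSpace ℂ (Fin n))‖ ^ 2 := by
        refine Finset.sum_le_sum fun i _ => ?_
        have h1 : orthogonalProjection U ((orthogonalProjection V (v i) : EuclideanSpace ℂ (Fin n)))
            = orthogonalProjection U (v i) :=
          Submodule.orthogonalProjectionOnto_starProjection_of_le hUV _
        have h2 : ‖(orthogonalProjection U (v i) : EuclideanSpace ℂ (Fin n))‖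
            ≤ ‖(orthogonalProjection V (v i) : EuclideanSpace ℂ (Fin n))‖ := by
          rw [← h1]; exact norm_proj_le' U _
        exact pow_le_pow_left₀ (norm_nonneg _) h2 2

lemma proj_sum_eq {n : ℕ} {v : Fin n → EuclideanSpace ℂ (Fin n)}
    (B : OrthonormalBasis (Fin n) ℂ (EuclideanSpace ℂ (Fin n))) (hB : ⇑B = v)
    (V : Submodule ℂ (EuclideanSpace ℂ (Fin n))) :
    (finrank ℂ V : ℝ) =
      ∑ i, ‖(orthogonalProjection V (v i) : EuclideanSpace ℂ (Fin n))‖ ^ 2 := by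
  classical
  let u := stdOrthonormalBasis ℂ V
  have key : ∀ j, ∑ i : Fin n,
      ‖⟪v i, ((u j : V) : EuclideanSpace ℂ (Fin n))⟫_ℂ‖ ^ 2 = 1 := by
    intro j
    have hp := parseval' B ((u j : V) : EuclideanSpace ℂ (Fin n))
    rw [hB] at hp
    rw [hp, Submodule.norm_coe, u.orthonormal.1 j, one_pow]
  calc (finrank ℂ V : ℝ)
      = ∑ _j : Fin (finrank ℂ V), (1:ℝ) := by simp
    _ = ∑ j, ∑ i : Fin n, ‖⟪v i, ((u j : V) : EuclideanSpace ℂ (Fin n))⟫_ℂ‖ ^ 2 :=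
        Finset.sum_congr rfl fun j _ => (key j).symm
    _ = ∑ i : Fin n, ∑ j, ‖⟪v i, ((u j : V) : EuclideanSpace ℂ (Fin n))⟫_ℂ‖ ^ 2 :=
        Finset.sum_comm
    _ = ∑ i, ‖(orthogonalProjection V (v i) : EuclideanSpace ℂ (Fin n))‖ ^ 2 := by
        refine Finset.sum_congr rfl fun i _ => ?_
        rw [proj_normsq' V u (v i)]
        exact Finset.sum_congr rfl fun j _ => by rw [norm_inner_symm]

end Helpers

/-- The Hersch–Zwahlen variational principle: for a Hermitian matrix `A` with nonincreasing
eigenvalues `λ` and orthonormal eigenbasis `v`, and a binary sequence `π`,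
`min_{V ∈ S_π(A)} Tr(P_V A) = ∑_i π(i) λ_i`, the minimum being attained at the span of the
eigenvectors `v_i` with `π(i) = 1`. -/
theorem hersch_zwahlen {n : ℕ} (A : Matrix (Fin n) (Fin n) ℂ) (hA : A.IsHermitian)
    (lam : Fin n → ℝ) (hlam : Antitone lam)
    (v : Fin n → EuclideanSpace ℂ (Fin n)) (hv : Orthonormal ℂ v)
    (heig : ∀ i, Matrix.toEuclideanLin A (v i) = (lam i : ℂ) • v i)
    (π : Fin n → ℕ) (hπ : ∀ i, π i ≤ 1) :
    (∀ V ∈ schubertCell v π, (∑ i, (π i : ℝ) * lam i) ≤ rayleighTrace A V) ∧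
      Submodule.span ℂ (v '' {j | π j = 1}) ∈ schubertCell v π ∧
      rayleighTrace A (Submodule.span ℂ (v '' {j | π j = 1})) =
        ∑ i, (π i : ℝ) * lam i := by
  classical
  have hspan : Submodule.span ℂ (Set.range v) = ⊤ :=
    hv.linearIndependent.span_eq_top_of_card_eq_finrank' (by simp)
  let B : OrthonormalBasis (Fin n) ℂ (EuclideanSpace ℂ (Fin n)) :=
    OrthonormalBasis.mk hv hspan.ge
  have hB : ⇑B = v := OrthonormalBasis.coe_mk hv _
  have hb : ⇑B.toBasis = v := by rw [OrthonormalBasis.coe_toBasis]; exact hB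
  have hflag : ∀ k : ℕ, flagOf v k = Submodule.span ℂ (B.toBasis '' {j : Fin n | (j:ℕ) < k}) := by
    intro k; rw [flagOf, hb]
  have horth : ∀ (k : ℕ) (i : Fin n), k ≤ (i:ℕ) → v i ∈ (flagOf v k)ᗮ := by
    intro k i hk
    apply mem_orthogonal_span'
    rintro y ⟨j, hj, rfl⟩
    refine hv.2 fun hij => ?_
    rw [hij] at hk
    exact absurd hj (by simpa using hk)
  have hWinf : ∀ k : ℕ, Submodule.span ℂ (v '' {j | π j = 1}) ⊓ flagOf v k
      = Submodule.span ℂ (B.toBasis '' ({j | π j = 1} ∩ {j : Fin n | (j:ℕ) < k})) := by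
    intro k
    rw [hflag k, ← hb, basis_span_inf]
  have hfr : ∀ s : Set (Fin n), finrank ℂ (Submodule.span ℂ (B.toBasis '' s)) = s.ncard :=
    fun s => finrank_span_basis_image B.toBasis s
  have hcount : ∀ k : ℕ, ({j | π j = 1} ∩ {j : Fin n | (j:ℕ) < k}).ncard
      = ∑ j ∈ Finset.univ.filter (fun j : Fin n => (j:ℕ) < k), π j := by
    intro k
    rw [Set.ncard_eq_toFinset_card']
    have h1 : ({j | π j = 1} ∩ {j : Fin n | (j:ℕ) < k}).toFinset
        = (Finset.univ.filter (fun j : Fin n => (j:ℕ) < k)).filter (fun j => π j = 1) := by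
      ext j
      simp [Finset.mem_filter, and_comm]
    rw [h1, Finset.card_filter]
    refine Finset.sum_congr rfl fun j _ => ?_
    rcases Nat.le_one_iff_eq_zero_or_eq_one.1 (hπ j) with h | h <;> simp [h]
  have hmem : Submodule.span ℂ (v '' {j | π j = 1}) ∈ schubertCell v π := by
    intro i
    rw [hWinf, hWinf, hfr, hfr, hcount, hcount, filter_succ_sum i.isLt π]
  have hproj1 : ∀ i : Fin n,
      ‖(orthogonalProjection (Submodule.span ℂ (v '' {j | π j = 1})) (v i)
        : EuclideanSpace ℂ (Fin n))‖ ^ 2 = (π i : ℝ) := by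
    intro i
    rcases Nat.le_one_iff_eq_zero_or_eq_one.1 (hπ i) with h | h
    · have hi : v i ∈ (Submodule.span ℂ (v '' {j | π j = 1}))ᗮ := by
        apply mem_orthogonal_span'
        rintro y ⟨j, hj, rfl⟩
        refine hv.2 fun hij => ?_
        rw [hij, hj] at h
        exact one_ne_zero h
      rw [orthogonalProjection_mem_subspace_orthogonalComplement_eq_zero hi]
      simp [h]
    · have hi : v i ∈ Submodule.span ℂ (v '' {j | π j = 1}) :=
        Submodule.subset_span ⟨i, h, rfl⟩
      rw [show (orthogonalProjection (Submodule.span ℂ (v '' {j | π j = 1})) (v i)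
          : EuclideanSpace ℂ (Fin n)) = v i from Submodule.starProjection_eq_self_iff.2 hi, hv.1 i]
      simp [h]
  have heq : rayleighTrace A (Submodule.span ℂ (v '' {j | π j = 1})) = ∑ i, (π i:ℝ) * lam i := by
    rw [rayleigh_formula A lam B hB heig]
    exact Finset.sum_congr rfl fun i _ => by rw [hproj1 i, mul_comm]
  refine ⟨?_, hmem, heq⟩
  intro V hV
  have hVfin : ∀ k : ℕ, k ≤ n →
      finrank ℂ (V ⊓ flagOf v k : Submodule ℂ (EuclideanSpace ℂ (Fin n)))
        = ∑ i ∈ Finset.univ.filter (fun i : Fin n => (i:ℕ) < k), π i := by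
    intro k
    induction k with
    | zero =>
      intro _
      have h0 : flagOf v 0 = ⊥ := by
        rw [flagOf]
        have : {j : Fin n | (j:ℕ) < 0} = ∅ := by ext j; simp
        rw [this]
        simp
      rw [h0]
      simp
    | succ k ih =>
      intro hk
      have hk' : k < n := hk
      calc finrank ℂ (V ⊓ flagOf v (k+1) : Submodule ℂ (EuclideanSpace ℂ (Fin n)))
          = finrank ℂ (V ⊓ flagOf v k : Submodule ℂ (EuclideanSpace ℂ (Fin n))) + π ⟨k, hk'⟩ :=
            hV ⟨k, hk'⟩
        _ = (∑ i ∈ Finset.univ.filter (fun i : Fin n => (i:ℕ) < k), π i) + π ⟨k, hk'⟩ := by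
            rw [ih hk'.le]
        _ = ∑ i ∈ Finset.univ.filter (fun i : Fin n => (i:ℕ) < k + 1), π i :=
            (filter_succ_sum hk' π).symm
  have hpartial : ∀ k : ℕ, k ≤ n →
      ((∑ i ∈ Finset.univ.filter (fun i : Fin n => (i:ℕ) < k), π i : ℕ) : ℝ)
        ≤ ∑ i ∈ Finset.univ.filter (fun i : Fin n => (i:ℕ) < k),
            ‖(orthogonalProjection V (v i) : EuclideanSpace ℂ (Fin n))‖ ^ 2 := by
    intro k hk
    rw [← hVfin k hk]
    refine proj_sum_ge B hB V (V ⊓ flagOf v k) inf_le_left k ?_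
    intro x hx i hik
    exact inner_left_of_mem_orthogonal hx.2 (horth k i hik)
  have h5 : Finset.univ.filter (fun i : Fin n => (i:ℕ) < n) = Finset.univ := by
    ext i; simp [i.isLt]
  have htot : ((∑ i, π i : ℕ) : ℝ)
      = ∑ i, ‖(orthogonalProjection V (v i) : EuclideanSpace ℂ (Fin n))‖ ^ 2 := by
    have h1 := hVfin n le_rfl
    have h2 : flagOf v n = ⊤ := by
      rw [flagOf]
      have : {j : Fin n | (j:ℕ) < n} = Set.univ := by ext j; simp [j.isLt]
      rw [this, Set.image_univ, hspan]
    rw [h2, inf_top_eq, h5] at h1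
    rw [← h1]
    exact proj_sum_eq B hB V
  -- Abel summation
  rcases Nat.eq_zero_or_pos n with hn | hn
  · subst hn
    simp [rayleigh_formula A lam B hB heig V]
  set t : Fin n → ℝ :=
    fun i => ‖(orthogonalProjection V (v i) : EuclideanSpace ℂ (Fin n))‖ ^ 2 with htdef
  have hR : rayleighTrace A V = ∑ i, lam i * t i := rayleigh_formula A lam B hB heig V
  set L : ℕ → ℝ := fun i => lam ⟨min i (n-1), by omega⟩ with hLdef
  have hLanti : Antitone L := by
    intro i j hij
    refine hlam ?_
    rw [Fin.mk_le_mk]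
    omega
  set D : ℕ → ℝ := fun i => if h : i < n then t ⟨i, h⟩ - (π ⟨i, h⟩ : ℝ) else 0 with hDdef
  have hrangesum : ∀ k, k ≤ n → ∑ i ∈ Finset.range k, D i
      = (∑ i ∈ Finset.univ.filter (fun i : Fin n => (i:ℕ) < k), t i)
        - ∑ i ∈ Finset.univ.filter (fun i : Fin n => (i:ℕ) < k), (π i : ℝ) := by
    intro k hk
    have h := range_sum_eq_filter (fun i : Fin n => t i - (π i : ℝ)) k hk
    rw [← Finset.sum_sub_distrib, ← h]
  have hS : ∀ k, k ≤ n → 0 ≤ ∑ i ∈ Finset.range k, D i := by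
    intro k hk
    rw [hrangesum k hk, sub_nonneg]
    have := hpartial k hk
    rw [Nat.cast_sum] at this
    exact this
  have hSn : ∑ i ∈ Finset.range n, D i = 0 := by
    rw [hrangesum n le_rfl, h5, sub_eq_zero]
    rw [← htot, Nat.cast_sum]
  have habel := abel_aux L D hLanti n hS
  rw [hSn, mul_zero] at habel
  have hfinal : ∑ i ∈ Finset.range n, L i * D i = ∑ i : Fin n, lam i * (t i - (π i : ℝ)) := by
    have h := range_sum_eq_filter (fun i : Fin n => lam i * (t i - (π i : ℝ))) n le_rfl
    rw [h5] at h
    rw [← h]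
    refine Finset.sum_congr rfl fun i hi => ?_
    have hin : i < n := Finset.mem_range.1 hi
    rw [dif_pos hin]
    show L i * D i = lam ⟨i, hin⟩ * (t ⟨i, hin⟩ - (π ⟨i, hin⟩ : ℝ))
    rw [hLdef, hDdef]
    simp only [dif_pos hin]
    congr 2
    refine Fin.ext ?_
    simp only [Fin.val_mk]
    omega
  rw [hfinal] at habel
  have hsplit : ∑ i : Fin n, lam i * (t i - (π i : ℝ))
      = ∑ i, lam i * t i - ∑ i, (π i : ℝ) * lam i := by
    rw [← Finset.sum_sub_distrib]
    refine Finset.sum_congr rfl fun i _ => by ring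
  rw [hsplit] at habel
  rw [hR]
  linarith
end
end

section
/- Let $\mathrm{SWAP}$ be the linear map on $\mathbb{C}^d \otimes \mathbb{C}^d$ determined by $\mathrm{SWAP}(a \otimes b) = b \otimes a$. Then for every vector $\psi \in \mathbb{C}^d \otimes \mathbb{C}^d$ there exist unitary operators $U_A$ and $U_B$ on $\mathbb{C}^d$ such that $\mathrm{SWAP}\, \psi = (U_A \otimes U_B)\, \psi$. -/
open Matrix
open scoped Kronecker

/-- The swap operator on `ℂ^d ⊗ ℂ^d`, determined by `SWAP (a ⊗ b) = b ⊗ a`, written as a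
matrix in the standard product basis. -/
noncomputable def swapMatrix (d : ℕ) : Matrix (Fin d × Fin d) (Fin d × Fin d) ℂ :=
  fun p q => if p.1 = q.2 ∧ p.2 = q.1 then 1 else 0

section Aux

open scoped ComplexOrder


variable {n : Type*} [Fintype n] [DecidableEq n]

private lemma conj_mul_conj {M : Type*} [Monoid M] {v w : M} (h : w * v = 1) (x y : M) :
    (v * x * w) * (v * y * w) = v * (x * y) * w := by
  calc (v * x * w) * (v * y * w) = v * x * ((w * v) * (y * w)) := by
        simp only [mul_assoc]
    _ = v * (x * y) * w := by rw [h, one_mul]; simp only [mul_assoc]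

/-- transpose of a unitary is unitary -/
private lemma transpose_mem_unitary {A : Matrix n n ℂ} (hA : A ∈ Matrix.unitaryGroup n ℂ) :
    Aᵀ ∈ Matrix.unitaryGroup n ℂ := by
  rw [Matrix.mem_unitaryGroup_iff]
  have h := Matrix.mem_unitaryGroup_iff'.mp hA
  calc Aᵀ * star Aᵀ = (star A * A)ᵀ := by
        simp [Matrix.transpose_mul, Matrix.star_eq_conjTranspose, Matrix.conjTranspose,
          Matrix.transpose_map]
    _ = 1 := by rw [h, Matrix.transpose_one]

/-- If `M = N₁ * D * N₂` with `N₁, N₂` unitary and `Dᵀ = D`, then `Mᵀ = A * M * Bᵀ`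
for suitable unitaries. -/
private lemma exists_unitary_of_decomp {M N₁ N₂ D : Matrix n n ℂ}
    (h₁ : N₁ ∈ Matrix.unitaryGroup n ℂ) (h₂ : N₂ ∈ Matrix.unitaryGroup n ℂ)
    (hD : Dᵀ = D) (hM : M = N₁ * D * N₂) :
    ∃ A B, A ∈ Matrix.unitaryGroup n ℂ ∧ B ∈ Matrix.unitaryGroup n ℂ ∧ A * M * Bᵀ = Mᵀ := by
  refine ⟨N₂ᵀ * star N₁, N₁ * (star N₂)ᵀ, ?_, ?_, ?_⟩
  · exact mul_mem (transpose_mem_unitary h₂) (Unitary.star_mem h₁)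
  · exact mul_mem h₁ (transpose_mem_unitary (Unitary.star_mem h₂))
  · have e1 : star N₁ * N₁ = 1 := Matrix.mem_unitaryGroup_iff'.mp h₁
    have e2 : N₂ * star N₂ = 1 := Matrix.mem_unitaryGroup_iff.mp h₂
    have hBt : (N₁ * (star N₂)ᵀ)ᵀ = star N₂ * N₁ᵀ := by
      rw [Matrix.transpose_mul, Matrix.transpose_transpose]
    rw [hBt, hM]
    calc N₂ᵀ * star N₁ * (N₁ * D * N₂) * (star N₂ * N₁ᵀ)
        = N₂ᵀ * ((star N₁ * N₁) * (D * ((N₂ * star N₂) * N₁ᵀ))) := by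
          simp only [Matrix.mul_assoc]
      _ = N₂ᵀ * (D * N₁ᵀ) := by rw [e1, e2, Matrix.one_mul, Matrix.one_mul]
      _ = (N₁ * D * N₂)ᵀ := by
          rw [Matrix.transpose_mul, Matrix.transpose_mul, hD]

/-- The key step for invertible `M`: SVD via the spectral theorem. -/
private lemma exists_unitary_of_isUnit {M : Matrix n n ℂ} (hM : IsUnit M.det) :
    ∃ A B, A ∈ Matrix.unitaryGroup n ℂ ∧ B ∈ Matrix.unitaryGroup n ℂ ∧ A * M * Bᵀ = Mᵀ := by
  have hH : (Mᴴ * M).IsHermitian := Matrix.isHermitian_conjTranspose_mul_self M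
  have hpsd : (Mᴴ * M).PosSemidef := Matrix.posSemidef_conjTranspose_mul_self M
  set ev : n → ℝ := hH.eigenvalues with hev
  have hnonneg : ∀ i, 0 ≤ ev i := fun i => hpsd.eigenvalues_nonneg i
  have hdet : (Mᴴ * M).det ≠ 0 := by
    rw [Matrix.det_mul, Matrix.det_conjTranspose]
    exact mul_ne_zero (star_ne_zero.mpr hM.ne_zero) hM.ne_zero
  have hne : ∀ i, ev i ≠ 0 := by
    intro i hi
    apply hdet
    rw [hH.det_eq_prod_eigenvalues]
    exact Finset.prod_eq_zero (Finset.mem_univ i) (by rw [← hev, hi]; simp)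
  set g : n → ℝ := fun i => Real.sqrt (ev i) with hg
  have hgne : ∀ i, g i ≠ 0 := fun i =>
    Real.sqrt_ne_zero'.mpr (lt_of_le_of_ne (hnonneg i) (Ne.symm (hne i)))
  set V : Matrix n n ℂ := (hH.eigenvectorUnitary : Matrix n n ℂ) with hV
  have hVmem : V ∈ Matrix.unitaryGroup n ℂ := hH.eigenvectorUnitary.2
  have h1 : star V * V = 1 := Matrix.mem_unitaryGroup_iff'.mp hVmem
  have h2 : V * star V = 1 := Matrix.mem_unitaryGroup_iff.mp hVmem
  set D : Matrix n n ℂ := Matrix.diagonal (fun i => (g i : ℂ)) with hD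
  set D' : Matrix n n ℂ := Matrix.diagonal (fun i => ((g i : ℝ) : ℂ)⁻¹) with hD'
  have hDD' : D * D' = 1 := by
    rw [hD, hD', Matrix.diagonal_mul_diagonal]
    have : (fun i => (g i : ℂ) * ((g i : ℝ) : ℂ)⁻¹) = fun _ => (1 : ℂ) :=
      funext fun i => mul_inv_cancel₀ (by exact_mod_cast hgne i)
    rw [this, Matrix.diagonal_one]
  have hD'D : D' * D = 1 := by
    rw [hD, hD', Matrix.diagonal_mul_diagonal]
    have : (fun i => ((g i : ℝ) : ℂ)⁻¹ * (g i : ℂ)) = fun _ => (1 : ℂ) :=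
      funext fun i => inv_mul_cancel₀ (by exact_mod_cast hgne i)
    rw [this, Matrix.diagonal_one]
  have hDD : D * D = Matrix.diagonal (RCLike.ofReal ∘ ev) := by
    rw [hD, Matrix.diagonal_mul_diagonal]
    have : (fun i => (g i : ℂ) * (g i : ℂ)) = RCLike.ofReal ∘ ev := by
      funext i
      rw [← Complex.ofReal_mul, hg]
      simp only [Real.mul_self_sqrt (hnonneg i), Function.comp_apply]
      rfl
    rw [this]
  have key : Mᴴ * M = V * (D * D) * star V := by
    rw [hDD]; exact hH.spectral_theorem
  have hD'star : star D' = D' := by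
    rw [hD', Matrix.star_eq_conjTranspose, Matrix.diagonal_conjTranspose]
    have : (star fun i => ((g i : ℝ) : ℂ)⁻¹) = fun i => ((g i : ℝ) : ℂ)⁻¹ := by
      funext i
      simp [Pi.star_apply, ← Complex.ofReal_inv, Complex.conj_ofReal]
    rw [this]
  set W : Matrix n n ℂ := V * D' * star V with hW
  have hWstar : star W = W := by
    rw [hW, Matrix.star_mul, Matrix.star_mul, star_star, hD'star, Matrix.mul_assoc]
  set U : Matrix n n ℂ := M * W with hU
  have hmid : D' * (D * D) * D' = 1 := by
    rw [← Matrix.mul_assoc D' D D, hD'D, Matrix.one_mul, hDD']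
  have hUmem : U ∈ Matrix.unitaryGroup n ℂ := by
    rw [Matrix.mem_unitaryGroup_iff']
    have hstep : star U * U = W * (Mᴴ * M) * W := by
      rw [hU, Matrix.star_mul, hWstar, ← Matrix.star_eq_conjTranspose]
      simp only [Matrix.mul_assoc]
    rw [hstep, key, hW, conj_mul_conj h1, conj_mul_conj h1, hmid, Matrix.mul_one, h2]
  have hMdecomp : M = (U * V) * D * (star V) := by
    have : U * (V * D * star V) = M := by
      rw [hU, hW, Matrix.mul_assoc M, conj_mul_conj h1, hD'D, Matrix.mul_one, h2,
        Matrix.mul_one]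
    rw [← this]
    simp only [Matrix.mul_assoc]
  exact exists_unitary_of_decomp (mul_mem hUmem hVmem) (Unitary.star_mem hVmem)
    (by rw [hD, Matrix.diagonal_transpose]) hMdecomp

open Filter Topology in
private lemma isCompact_unitary : IsCompact (Matrix.unitaryGroup n ℂ : Set (Matrix n n ℂ)) := by
  have hcomp : IsCompact {A : Matrix n n ℂ | ∀ i j, A i j ∈ Metric.closedBall (0 : ℂ) 1} := by
    have e : {A : Matrix n n ℂ | ∀ i j, A i j ∈ Metric.closedBall (0 : ℂ) 1} =
        Set.pi Set.univ (fun _ : n => Set.pi Set.univ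
          (fun _ : n => Metric.closedBall (0 : ℂ) 1)) := by
      ext A
      exact ⟨fun h i _ j _ => h i j, fun h i j => h i (Set.mem_univ i) j (Set.mem_univ j)⟩
    rw [e]
    exact isCompact_univ_pi fun _ => isCompact_univ_pi fun _ => isCompact_closedBall _ _
  have hclosed : IsClosed (Matrix.unitaryGroup n ℂ : Set (Matrix n n ℂ)) := by
    have e : (Matrix.unitaryGroup n ℂ : Set (Matrix n n ℂ)) =
        (fun A : Matrix n n ℂ => A * Aᴴ) ⁻¹' {1} := by
      ext A
      simp [Matrix.mem_unitaryGroup_iff, Matrix.star_eq_conjTranspose]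
    rw [e]
    exact IsClosed.preimage (continuous_id.matrix_mul continuous_id.matrix_conjTranspose)
      isClosed_singleton
  refine IsCompact.of_isClosed_subset hcomp hclosed ?_
  intro A hA i j
  have h : A * star A = 1 := Matrix.mem_unitaryGroup_iff.mp hA
  have h2 : (∑ k, Complex.normSq (A i k) : ℂ) = 1 := by
    have := congr_fun (congr_fun (congrArg (fun X : Matrix n n ℂ => (X : Matrix n n ℂ)) h) i) i
    simp only [Matrix.mul_apply, Matrix.star_apply, Matrix.one_apply_eq] at this
    rw [← this]
    push_cast
    refine Finset.sum_congr rfl fun k _ => ?_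
    rw [← Complex.mul_conj]
    rfl
  have h3 : ∑ k, Complex.normSq (A i k) = 1 := by exact_mod_cast h2
  have h4 : Complex.normSq (A i j) ≤ 1 := by
    rw [← h3]
    exact Finset.single_le_sum (fun k _ => Complex.normSq_nonneg _) (Finset.mem_univ j)
  simp only [Metric.mem_closedBall, dist_zero_right]
  have h5 : ‖A i j‖ ^ 2 ≤ 1 := by rwa [← Complex.sq_norm] at h4
  nlinarith [norm_nonneg (A i j)]

open Filter Topology in
/-- The general case, by approximating `M` with invertible matrices and compactness of the
unitary group. -/
private lemma exists_unitary_all (M : Matrix n n ℂ) :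
    ∃ A B, A ∈ Matrix.unitaryGroup n ℂ ∧ B ∈ Matrix.unitaryGroup n ℂ ∧ A * M * Bᵀ = Mᵀ := by
  -- a sequence of scalars avoiding the (finite) spectrum of `M` and tending to `0`
  have hSfin : (spectrum ℂ M).Finite := Matrix.finite_spectrum M
  set u : ℕ → ℂ := fun k => ((k : ℂ) + 1)⁻¹ with hu
  have hinj : Function.Injective u := by
    intro a b h
    have h2 : ((a : ℂ) + 1) = ((b : ℂ) + 1) := inv_injective h
    exact_mod_cast add_right_cancel h2
  have hpre : {k : ℕ | u k ∈ spectrum ℂ M}.Finite :=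
    Set.Finite.preimage hinj.injOn hSfin
  obtain ⟨b, hb⟩ := hpre.bddAbove
  set z : ℕ → ℂ := fun k => u (k + (b + 1)) with hz
  have hznot : ∀ k, z k ∉ spectrum ℂ M := by
    intro k hk
    have : k + (b + 1) ≤ b := hb hk
    omega
  have hzunit : ∀ k, IsUnit (z k • (1 : Matrix n n ℂ) - M) := by
    intro k
    have := spectrum.notMem_iff.mp (hznot k)
    rwa [Algebra.algebraMap_eq_smul_one] at this
  have hztend : Tendsto z atTop (𝓝 0) := by
    refine squeeze_zero_norm (a := fun k : ℕ => 1 / ((k : ℝ) + 1)) (fun k => ?_)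
      tendsto_one_div_add_atTop_nhds_zero_nat
    have : ‖z k‖ = ((k + (b + 1) : ℝ) + 1)⁻¹ := by
        rw [hz, hu]
        simp only [norm_inv]
        rw [show ((k + (b + 1) : ℕ) : ℂ) + 1 = (((k + (b + 1) : ℕ) + 1 : ℕ) : ℂ) by push_cast; ring]
        rw [Complex.norm_natCast]
        push_cast
        ring_nf
    rw [this]
    simp only [one_div]
    apply inv_anti₀ (by positivity)
    push_cast
    linarith
  -- the approximating matrices and their limits
  set Ms : ℕ → Matrix n n ℂ := fun k => z k • (1 : Matrix n n ℂ) - M with hMs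
  have hF : Continuous fun c : ℂ => c • (1 : Matrix n n ℂ) - M := by
    apply Continuous.sub _ continuous_const
    apply continuous_matrix
    intro i j
    simp only [Matrix.smul_apply, smul_eq_mul]
    exact continuous_id.mul continuous_const
  have hMtend : Tendsto Ms atTop (𝓝 (-M)) := by
    have := (hF.tendsto 0).comp hztend
    simp only [zero_smul, zero_sub] at this
    exact this
  -- unitaries for each approximant
  have hex : ∀ k, ∃ A B, A ∈ Matrix.unitaryGroup n ℂ ∧ B ∈ Matrix.unitaryGroup n ℂ ∧
      A * Ms k * Bᵀ = (Ms k)ᵀ := by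
    intro k
    exact exists_unitary_of_isUnit ((Matrix.isUnit_iff_isUnit_det _).mp (hzunit k))
  choose A B hA hB heq using hex
  -- extract a convergent subsequence of the pairs of unitaries
  have hcompact : IsCompact ((Matrix.unitaryGroup n ℂ : Set (Matrix n n ℂ)) ×ˢ
      (Matrix.unitaryGroup n ℂ : Set (Matrix n n ℂ))) :=
    isCompact_unitary.prod isCompact_unitary
  haveI : FirstCountableTopology (Matrix n n ℂ) :=
    inferInstanceAs (FirstCountableTopology (n → n → ℂ))
  obtain ⟨⟨A₀, B₀⟩, hmem, φ, hφ, hconv⟩ :=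
    hcompact.tendsto_subseq (x := fun k => (A k, B k)) (fun k => ⟨hA k, hB k⟩)
  rw [nhds_prod_eq] at hconv
  have hconvA : Tendsto (fun k => A (φ k)) atTop (𝓝 A₀) := (tendsto_prod_iff'.mp hconv).1
  have hconvB : Tendsto (fun k => B (φ k)) atTop (𝓝 B₀) := (tendsto_prod_iff'.mp hconv).2
  have hconvM : Tendsto (fun k => Ms (φ k)) atTop (𝓝 (-M)) :=
    hMtend.comp (hφ.tendsto_atTop)
  have hconvBt : Tendsto (fun k => (B (φ k))ᵀ) atTop (𝓝 B₀ᵀ) :=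
    ((continuous_id.matrix_transpose).tendsto _).comp hconvB
  have T1 : Tendsto (fun k => A (φ k) * Ms (φ k) * (B (φ k))ᵀ) atTop (𝓝 (A₀ * (-M) * B₀ᵀ)) :=
    (hconvA.mul hconvM).mul hconvBt
  have T2 : Tendsto (fun k => (Ms (φ k))ᵀ) atTop (𝓝 (-M)ᵀ) :=
    ((continuous_id.matrix_transpose).tendsto _).comp hconvM
  have hlim : A₀ * (-M) * B₀ᵀ = (-M)ᵀ := by
    apply tendsto_nhds_unique _ T2
    convert T1 using 2 with k
    exact (heq (φ k)).symm
  refine ⟨A₀, B₀, hmem.1, hmem.2, ?_⟩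
  have := congrArg Neg.neg hlim
  simpa [Matrix.mul_neg, Matrix.neg_mul, Matrix.transpose_neg] using this

open scoped Kronecker in
theorem swap_eq_local_unitaries' {d : ℕ} (ψ : Fin d × Fin d → ℂ)
    (swapMatrix : Matrix (Fin d × Fin d) (Fin d × Fin d) ℂ)
    (hswap : swapMatrix = fun p q => if p.1 = q.2 ∧ p.2 = q.1 then 1 else 0) :
    ∃ UA UB : Matrix (Fin d) (Fin d) ℂ,
      UA ∈ Matrix.unitaryGroup (Fin d) ℂ ∧ UB ∈ Matrix.unitaryGroup (Fin d) ℂ ∧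
      swapMatrix.mulVec ψ = (UA ⊗ₖ UB).mulVec ψ := by
  set Mψ : Matrix (Fin d) (Fin d) ℂ := Matrix.of (fun i j => ψ (i, j)) with hMψ
  obtain ⟨A, B, hA, hB, h⟩ := exists_unitary_all Mψ
  refine ⟨A, B, hA, hB, ?_⟩
  funext p
  have hswapv : swapMatrix.mulVec ψ p = ψ (p.2, p.1) := by
    rw [Matrix.mulVec, hswap]
    unfold dotProduct
    rw [Finset.sum_eq_single (p.2, p.1)]
    · simp
    · intro q _ hq
      have : ¬(p.1 = q.2 ∧ p.2 = q.1) := by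
        rintro ⟨h1, h2⟩
        exact hq (Prod.ext h2.symm h1.symm)
      simp [this]
    · simp
  have hkron : (A ⊗ₖ B).mulVec ψ p = (A * Mψ * Bᵀ) p.1 p.2 := by
    rw [Matrix.mulVec]
    unfold dotProduct
    rw [Matrix.mul_apply]
    rw [Fintype.sum_prod_type]
    rw [Finset.sum_comm]
    refine Finset.sum_congr rfl fun l _ => ?_
    rw [Matrix.mul_apply, Finset.sum_mul]
    refine Finset.sum_congr rfl fun k _ => ?_
    simp [Matrix.kroneckerMap_apply, Matrix.transpose_apply, hMψ]
    ring
  rw [hswapv, hkron, h, Matrix.transpose_apply]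
  rfl

end Aux

/-- For every `ψ ∈ ℂ^d ⊗ ℂ^d` there are unitaries `U_A`, `U_B` on `ℂ^d` with
`SWAP ψ = (U_A ⊗ U_B) ψ`. -/
theorem swap_eq_local_unitaries {d : ℕ} (ψ : Fin d × Fin d → ℂ) :
    ∃ UA UB : Matrix (Fin d) (Fin d) ℂ,
      UA ∈ Matrix.unitaryGroup (Fin d) ℂ ∧ UB ∈ Matrix.unitaryGroup (Fin d) ℂ ∧
      (swapMatrix d).mulVec ψ = (UA ⊗ₖ UB).mulVec ψ :=
  swap_eq_local_unitaries' ψ (swapMatrix d) rfl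
end

section
/- (Jacobi–Trudi formula) Let $\alpha = (\alpha_1 \geq \cdots \geq \alpha_n \geq 0)$ be a partition with at most $n$ parts. Then, in $\mathbb{Z}[x_1, \ldots, x_n]$, $\det\big(x_i^{\alpha_j + n - j}\big)_{1 \leq i,j \leq n} = \det\big(h_{\alpha_i - i + j}\big)_{1 \leq i,j \leq n} \cdot \det\big(x_i^{n-j}\big)_{1 \leq i,j \leq n}$, i.e., the Schur polynomial $s_\alpha = \det(x_i^{\alpha_j+n-j}) / \det(x_i^{n-j})$ equals the determinant $\det(h_{\alpha_i - i + j})_{1 \leq i,j \leq n}$ in the complete symmetric polynomials. -/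
open MvPolynomial

/-- The complete symmetric polynomial `h_k ∈ ℤ[x_1, …, x_n]`, extended by the convention
`h_k = 0` for `k < 0`. -/
noncomputable def hInt (n : ℕ) (k : ℤ) : MvPolynomial (Fin n) ℤ :=
  if 0 ≤ k then MvPolynomial.hsymm (Fin n) ℤ k.toNat else 0

namespace JacobiTrudiAux

/-- Geometric series `∑ m, x_a^m t^m`. -/
noncomputable def G {n : ℕ} (a : Fin n) : PowerSeries (MvPolynomial (Fin n) ℤ) :=
  PowerSeries.mk fun m => MvPolynomial.X a ^ m

lemma geom {n : ℕ} (a : Fin n) :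
    (1 - PowerSeries.C (MvPolynomial.X a) * PowerSeries.X) * G a = 1 := by
  ext m
  rw [sub_mul, one_mul, map_sub, mul_assoc]
  cases m with
  | zero =>
      simp [G]
  | succ m =>
      simp [G, PowerSeries.coeff_C_mul, PowerSeries.coeff_succ_X_mul, pow_succ, mul_comm,
        PowerSeries.coeff_one]

lemma hInt_cast (n m k : ℕ) :
    hInt n ((m : ℤ) - k) = if k ≤ m then MvPolynomial.hsymm (Fin n) ℤ (m - k) else 0 := by
  unfold hInt
  have h1 : ((m : ℤ) - k).toNat = m - k := by omega
  by_cases h : k ≤ m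
  · rw [if_pos (by omega), if_pos h, h1]
  · rw [if_neg (by omega), if_neg h]

lemma coeff_prod_G {n : ℕ} (m : ℕ) :
    PowerSeries.coeff m (∏ a : Fin n, G a)
      = MvPolynomial.hsymm (Fin n) ℤ m := by
  classical
  rw [PowerSeries.coeff_prod, MvPolynomial.hsymm]
  have hkey : ∀ l : Fin n →₀ ℕ, l ∈ Finset.finsuppAntidiag Finset.univ m →
      Multiset.card (Finsupp.toMultiset l) = m := by
    intro l hl
    rw [Finset.mem_finsuppAntidiag] at hl
    rw [Finsupp.card_toMultiset, Finsupp.sum_fintype _ _ fun _ => rfl]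
    exact hl.1
  refine Finset.sum_bij' (fun l hl => (⟨Finsupp.toMultiset l, hkey l hl⟩ : Sym (Fin n) m))
    (fun s _ => Multiset.toFinsupp s.1) (fun _ _ => Finset.mem_univ _) ?_ ?_ ?_ ?_
  · intro s _
    rw [Finset.mem_finsuppAntidiag]
    refine ⟨?_, Finset.subset_univ _⟩
    have h1 : Multiset.card (Finsupp.toMultiset (Multiset.toFinsupp s.1)) = m := by
      rw [Multiset.toFinsupp_toMultiset, s.2]
    rw [Finsupp.card_toMultiset, Finsupp.sum_fintype _ _ fun _ => rfl] at h1
    exact h1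
  · intro l hl
    exact Finsupp.toMultiset_toFinsupp l
  · intro s _
    exact Subtype.ext (Multiset.toFinsupp_toMultiset s.1)
  · intro l hl
    calc ∏ a : Fin n, PowerSeries.coeff (l a) (G a)
        = ∏ a : Fin n, MvPolynomial.X a ^ (l a) := by
          simp [G]
      _ = ∏ a ∈ (Finsupp.toMultiset l).toFinset, MvPolynomial.X a ^ (l a) := by
          refine (Finset.prod_subset (Finset.subset_univ _) fun a _ ha => ?_).symm
          have h0 : l a = 0 := by
            by_contra h
            exact ha (Multiset.mem_toFinset.2 ((Finsupp.mem_toMultiset l a).2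
              (Finsupp.mem_support_iff.2 h)))
          rw [h0, pow_zero]
      _ = ((Finsupp.toMultiset l).map MvPolynomial.X).prod := by
          rw [Finset.prod_multiset_map_count]
          exact Finset.prod_congr rfl fun a _ => by rw [Finsupp.count_toMultiset]

/-- `∏_{l ≠ i} (1 - x_l t)`. -/
noncomputable def Pex {n : ℕ} (i : Fin n) : PowerSeries (MvPolynomial (Fin n) ℤ) :=
  ∏ l ∈ Finset.univ.erase i, (1 - PowerSeries.C (MvPolynomial.X l) * PowerSeries.X)

lemma coeff_prod_one_sub {n : ℕ} (V : Finset (Fin n)) :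
    ∀ k : ℕ, V.card < k →
    PowerSeries.coeff k
      (∏ l ∈ V, (1 - PowerSeries.C (MvPolynomial.X l : MvPolynomial (Fin n) ℤ)
        * PowerSeries.X)) = 0 := by
  classical
  induction V using Finset.induction_on with
  | empty =>
      intro k hk
      rw [Finset.prod_empty]
      cases k with
      | zero => omega
      | succ k => simp [PowerSeries.coeff_one]
  | @insert a V ha ih =>
      intro k hk
      rw [Finset.prod_insert ha, sub_mul, one_mul, map_sub, mul_assoc,
        PowerSeries.coeff_C_mul]
      rw [Finset.card_insert_of_notMem ha] at hk
      obtain ⟨k, rfl⟩ : ∃ k', k = k' + 1 := ⟨k - 1, by omega⟩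
      rw [PowerSeries.coeff_succ_X_mul, ih _ (by omega), ih _ (by omega), mul_zero, sub_zero]

lemma coeff_Pex_zero {n : ℕ} (i : Fin n) (k : ℕ) (hk : n ≤ k) :
    PowerSeries.coeff k (Pex i) = 0 := by
  apply coeff_prod_one_sub
  have : (Finset.univ.erase i).card = n - 1 := by
    rw [Finset.card_erase_of_mem (Finset.mem_univ i), Finset.card_univ, Fintype.card_fin]
  have := i.pos
  omega

lemma key {n : ℕ} (i : Fin n) (m : ℕ) :
    ∑ k ∈ Finset.range n, PowerSeries.coeff k (Pex i) * hInt n ((m : ℤ) - k)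
      = (MvPolynomial.X i : MvPolynomial (Fin n) ℤ) ^ m := by
  classical
  have h2 : Pex i * ∏ l ∈ Finset.univ.erase i, G l = 1 := by
    rw [Pex, ← Finset.prod_mul_distrib]
    exact Finset.prod_eq_one fun l _ => geom l
  have h1 : Pex i * ∏ a : Fin n, G a = G i := by
    rw [← Finset.mul_prod_erase _ _ (Finset.mem_univ i), mul_left_comm, h2, mul_one]
  have h3 : (MvPolynomial.X i : MvPolynomial (Fin n) ℤ) ^ m
      = PowerSeries.coeff m (Pex i * ∏ a : Fin n, G a) := by
    rw [h1]; simp [G]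
  rw [h3, PowerSeries.coeff_mul, Finset.Nat.sum_antidiagonal_eq_sum_range_succ_mk]
  simp only [coeff_prod_G]
  calc ∑ k ∈ Finset.range n, PowerSeries.coeff k (Pex i) * hInt n ((m : ℤ) - k)
      = ∑ k ∈ Finset.range (max n (m + 1)),
          PowerSeries.coeff k (Pex i) * hInt n ((m : ℤ) - k) := by
        refine Finset.sum_subset (Finset.range_subset_range.2 (le_max_left _ _)) ?_
        intro k _ hk
        rw [Finset.mem_range, not_lt] at hk
        rw [coeff_Pex_zero i k hk, zero_mul]
    _ = ∑ k ∈ Finset.range (m + 1),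
          PowerSeries.coeff k (Pex i) * hInt n ((m : ℤ) - k) := by
        refine (Finset.sum_subset (Finset.range_subset_range.2 (le_max_right _ _)) ?_).symm
        intro k _ hk
        rw [Finset.mem_range, not_lt] at hk
        rw [hInt_cast, if_neg (by omega), mul_zero]
    _ = ∑ k ∈ Finset.range (m + 1),
          PowerSeries.coeff k (Pex i) * MvPolynomial.hsymm (Fin n) ℤ (m - k) := by
        refine Finset.sum_congr rfl fun k hk => ?_
        rw [Finset.mem_range] at hk
        rw [hInt_cast, if_pos (by omega)]

end JacobiTrudiAux

open JacobiTrudiAux in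
/-- The Jacobi–Trudi formula: for a partition `α` with at most `n` parts (written with
`0`-based indices `i, j : Fin n`),
`det(x_i^{α_j + (n-1-j)}) = det(h_{α_i - i + j}) ⬝ det(x_i^{n-1-j})`, i.e. the Schur
polynomial `s_α` equals `det(h_{α_i - i + j})`. -/
theorem jacobi_trudi {n : ℕ} (α : Fin n → ℕ) (hα : Antitone α) :
    Matrix.det (Matrix.of fun i j : Fin n =>
        (MvPolynomial.X i : MvPolynomial (Fin n) ℤ) ^ (α j + (n - 1 - (j : ℕ)))) =
      Matrix.det (Matrix.of fun i j : Fin n =>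
          hInt n ((α i : ℤ) - (i : ℕ) + (j : ℕ))) *
        Matrix.det (Matrix.of fun i j : Fin n =>
          (MvPolynomial.X i : MvPolynomial (Fin n) ℤ) ^ (n - 1 - (j : ℕ))) := by
  classical
  set R := MvPolynomial (Fin n) ℤ
  set Bm : Matrix (Fin n) (Fin n) R :=
    Matrix.of fun i k : Fin n => PowerSeries.coeff (k : ℕ) (Pex i) with hBm
  set Cm : (Fin n → ℕ) → Matrix (Fin n) (Fin n) R := fun β =>
    Matrix.of fun k j : Fin n => hInt n ((β j : ℤ) + ((n - 1 - (j : ℕ) : ℕ) : ℤ) - k) with hCm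
  set Hm : (Fin n → ℕ) → Matrix (Fin n) (Fin n) R := fun β =>
    Matrix.of fun i j : Fin n => hInt n ((β i : ℤ) - (i : ℕ) + (j : ℕ)) with hHm
  have hBC : ∀ β : Fin n → ℕ,
      Bm * Cm β = Matrix.of fun i j : Fin n =>
        (MvPolynomial.X i : R) ^ (β j + (n - 1 - (j : ℕ))) := by
    intro β
    refine Matrix.ext fun i j => ?_
    rw [Matrix.mul_apply, Matrix.of_apply]
    have hkey := key i (β j + (n - 1 - (j : ℕ)))
    rw [← hkey, ← Fin.sum_univ_eq_sum_range (fun k =>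
      PowerSeries.coeff k (Pex i)
        * hInt n (((β j + (n - 1 - (j : ℕ)) : ℕ) : ℤ) - (k : ℕ)))]
    refine Finset.sum_congr rfl fun k _ => ?_
    simp only [hBm, hCm, Matrix.of_apply]
    congr 1
  set s : R := ((Equiv.Perm.sign (Fin.revPerm (n := n)) : ℤ) : R) with hs
  have hsq : s * s = 1 := by
    rw [hs, ← Int.cast_mul, ← Units.val_mul, Int.units_mul_self, Units.val_one, Int.cast_one]
  have hdetC : ∀ β : Fin n → ℕ, (Cm β).det = s * (Hm β).det := by
    intro β
    have hsub : Hm β = ((Cm β).transpose).submatrix id (Fin.revPerm (n := n)) := by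
      refine Matrix.ext fun i j => ?_
      simp only [hHm, hCm, Matrix.submatrix_apply, Matrix.transpose_apply, Matrix.of_apply, id,
        Fin.revPerm_apply, Fin.val_rev]
      congr 1
      have hi := i.isLt
      have hj2 := j.isLt
      omega
    have := Matrix.det_permute' (Fin.revPerm (n := n)) ((Cm β).transpose)
    rw [← hsub, Matrix.det_transpose] at this
    calc (Cm β).det = s * (s * (Cm β).det) := by rw [← mul_assoc, hsq, one_mul]
      _ = s * (Hm β).det := by rw [← this, hs]
  have hH0 : (Hm fun _ => 0).det = 1 := by
    have htri : (Hm fun _ => 0).BlockTriangular id := by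
      intro i j hij
      simp only [hHm, Matrix.of_apply, Nat.cast_zero]
      rw [hInt, if_neg]
      have : (j : ℕ) < (i : ℕ) := hij
      omega
    rw [Matrix.det_of_upperTriangular htri]
    refine Finset.prod_eq_one fun i _ => ?_
    simp only [hHm, Matrix.of_apply, Nat.cast_zero]
    rw [show (0 : ℤ) - (i : ℕ) + (i : ℕ) = 0 by ring]
    rw [hInt, if_pos le_rfl]
    simpa using MvPolynomial.hsymm_zero (Fin n) ℤ
  have hA : ∀ β : Fin n → ℕ,
      (Matrix.of fun i j : Fin n =>
        (MvPolynomial.X i : R) ^ (β j + (n - 1 - (j : ℕ)))).det = Bm.det * (s * (Hm β).det) := by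
    intro β
    rw [← hBC β, Matrix.det_mul, hdetC β]
  have hA0 : (Matrix.of fun i j : Fin n =>
      (MvPolynomial.X i : R) ^ (n - 1 - (j : ℕ))).det = Bm.det * s := by
    have := hA fun _ => 0
    simp only [zero_add] at this
    rw [this, hH0, mul_one]
  rw [hA α, hA0]
  ring
end

section
/- (Pieri formula, complete case) Let $\alpha$ be a partition with at most $n$ parts, $\delta = (n-1, n-2, \ldots, 1, 0)$, and $a_\gamma = \det(x_i^{\gamma_j})_{1 \leq i,j \leq n}$ the alternant in $\mathbb{Z}[x_1, \ldots, x_n]$. Then for $k \geq 1$, $a_{\alpha + \delta} \cdot h_k = \sum_{\beta} a_{\beta + \delta}$, where the sum is over all partitions $\beta$ with at most $n$ parts such that $|\beta| = |\alpha| + k$ and $\alpha_i \leq \beta_i$ with $\beta_{i+1} \leq \alpha_i$ for every $i$ (i.e., $\beta$ is obtained from $\alpha$ by adding $k$ boxes, at most one per column). Equivalently, for the Schur polynomials $s_\alpha = a_{\alpha+\delta}/a_\delta$, $s_\alpha h_k = \sum_{\beta \in \alpha \otimes k} s_\beta$. -/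
open MvPolynomial
open scoped Classical

/-- The alternant `a_γ = det(x_i^{γ_j}) ∈ ℤ[x_1, …, x_n]`. -/
noncomputable def alternant {n : ℕ} (γ : Fin n → ℕ) : MvPolynomial (Fin n) ℤ :=
  Matrix.det (Matrix.of fun i j : Fin n =>
    (MvPolynomial.X i : MvPolynomial (Fin n) ℤ) ^ γ j)

/-- The staircase `δ = (n-1, n-2, …, 1, 0)`. -/
def staircase (n : ℕ) : Fin n → ℕ := fun j => n - 1 - (j : ℕ)

lemma antitone_of_adj {n : ℕ} {f : Fin n → ℕ}
    (h : ∀ (i : Fin n) (hi : (i : ℕ) + 1 < n), f ⟨(i : ℕ) + 1, hi⟩ ≤ f i) : Antitone f := by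
  intro a b hab
  obtain ⟨d, hd⟩ := Nat.exists_eq_add_of_le (show (a : ℕ) ≤ b from hab)
  clear hab
  induction d generalizing b with
  | zero => have : a = b := Fin.ext (by omega); subst this; exact le_rfl
  | succ d ih =>
    have hb1 : (a : ℕ) + d < n := by omega
    have hbn : ((⟨(a : ℕ) + d, hb1⟩ : Fin n) : ℕ) + 1 < n := by simpa using by omega
    have hb : b = ⟨((⟨(a : ℕ) + d, hb1⟩ : Fin n) : ℕ) + 1, hbn⟩ := Fin.ext (by simp; omega)
    calc f b ≤ f ⟨(a : ℕ) + d, hb1⟩ := by rw [hb]; exact h ⟨(a : ℕ) + d, hb1⟩ hbn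
    _ ≤ f a := ih rfl

private lemma card_sum_repl {n : ℕ} (ν : Fin n → ℕ) :
    Multiset.card (∑ i, Multiset.replicate (ν i) (i : Fin n)) = ∑ i, ν i := by
  classical
  induction (Finset.univ : Finset (Fin n)) using Finset.induction_on with
  | empty => simp
  | insert _ _ hx ih => simp_all [Finset.sum_insert hx]

lemma hsymm_eq_sum (n k : ℕ) :
    MvPolynomial.hsymm (Fin n) ℤ k
      = ∑ ν ∈ Finset.Nat.antidiagonalTuple n k,
          ∏ i, (MvPolynomial.X i : MvPolynomial (Fin n) ℤ) ^ ν i := by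
  rw [MvPolynomial.hsymm]
  refine Finset.sum_bij' (fun s _ => fun i => Multiset.count i s.1)
    (fun ν hν => ⟨∑ i, Multiset.replicate (ν i) i, by
      rw [card_sum_repl]; exact Finset.Nat.mem_antidiagonalTuple.mp hν⟩) ?_ ?_ ?_ ?_ ?_
  · intro s _
    rw [Finset.Nat.mem_antidiagonalTuple]
    beta_reduce
    have h1 : ∑ i : Fin n, Multiset.count i s.1 = ∑ a ∈ s.1.toFinset, Multiset.count a s.1 :=
      (Finset.sum_subset (Finset.subset_univ _) (by
        intro x _ hx
        exact (Multiset.count_eq_zero).2 (by simpa [Multiset.mem_toFinset] using hx))).symm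
    rw [h1, Multiset.toFinset_sum_count_eq, s.2]
  · intro ν _; exact Finset.mem_univ _
  · intro s _
    apply Subtype.ext
    simp only
    ext a
    rw [Multiset.count_sum']
    simp [Multiset.count_replicate]
  · intro ν _
    funext a
    simp only
    rw [Multiset.count_sum']
    simp [Multiset.count_replicate]
  · intro s _
    beta_reduce
    refine (Finset.prod_multiset_map_count (s : Multiset (Fin n))
      (X : Fin n → MvPolynomial (Fin n) ℤ)).trans ?_
    refine Finset.prod_subset (Finset.subset_univ _) ?_
    intro x _ hx
    have hxs : x ∉ (s : Multiset (Fin n)) := by simpa [Multiset.mem_toFinset] using hx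
    rw [Multiset.count_eq_zero_of_notMem hxs, pow_zero]

lemma alternant_expand {n : ℕ} (τ : Fin n → ℕ) :
    alternant τ = ∑ σ : Equiv.Perm (Fin n),
      Equiv.Perm.sign σ • ∏ i, (MvPolynomial.X (σ i) : MvPolynomial (Fin n) ℤ) ^ τ i := by
  rw [alternant, Matrix.det_apply]
  rfl

lemma alternant_mul_hsymm {n : ℕ} (γ : Fin n → ℕ) (k : ℕ) :
    alternant γ * MvPolynomial.hsymm (Fin n) ℤ k
      = ∑ μ ∈ Finset.Nat.antidiagonalTuple n k, alternant (fun j => γ j + μ j) := by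
  rw [hsymm_eq_sum, Finset.mul_sum]
  have L : ∀ ν : Fin n → ℕ,
      alternant γ * ∏ i, (X i : MvPolynomial (Fin n) ℤ) ^ ν i
        = ∑ σ : Equiv.Perm (Fin n), Equiv.Perm.sign σ •
            ∏ i, (X (σ i) : MvPolynomial (Fin n) ℤ) ^ (γ i + ν (σ i)) := by
    intro ν
    rw [alternant_expand, Finset.sum_mul]
    refine Finset.sum_congr rfl fun σ _ => ?_
    rw [smul_mul_assoc]
    congr 1
    have hprod : (∏ i, (X i : MvPolynomial (Fin n) ℤ) ^ ν i)
        = ∏ i, (X (σ i) : MvPolynomial (Fin n) ℤ) ^ ν (σ i) :=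
      (Equiv.prod_comp σ fun i => (X i : MvPolynomial (Fin n) ℤ) ^ ν i).symm
    rw [hprod, ← Finset.prod_mul_distrib]
    exact Finset.prod_congr rfl fun i _ => (pow_add _ _ _).symm
  simp only [L]
  have R : ∀ μ : Fin n → ℕ, alternant (fun j => γ j + μ j)
      = ∑ σ : Equiv.Perm (Fin n), Equiv.Perm.sign σ •
          ∏ i, (X (σ i) : MvPolynomial (Fin n) ℤ) ^ (γ i + μ i) :=
    fun μ => alternant_expand _
  simp only [R]
  rw [Finset.sum_comm]
  conv_rhs => rw [Finset.sum_comm]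
  refine Finset.sum_congr rfl fun σ _ => ?_
  refine Finset.sum_nbij' (fun ν => ν ∘ σ) (fun μ => μ ∘ σ.symm) ?_ ?_ ?_ ?_ ?_
  · intro ν hν
    rw [Finset.Nat.mem_antidiagonalTuple] at hν ⊢
    rw [← hν]
    exact Equiv.sum_comp σ ν
  · intro μ hμ
    rw [Finset.Nat.mem_antidiagonalTuple] at hμ ⊢
    rw [← hμ]
    exact Equiv.sum_comp σ.symm μ
  · intro ν _; funext j; simp
  · intro μ _; funext j; simp
  · intro ν _; rfl

def IsGood {n : ℕ} (α μ : Fin n → ℕ) : Prop :=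
  ∀ (i : Fin n) (hi : (i : ℕ) + 1 < n), α ⟨(i : ℕ) + 1, hi⟩ + μ ⟨(i : ℕ) + 1, hi⟩ ≤ α i

open scoped Classical in
noncomputable def badSet {n : ℕ} (α μ : Fin n → ℕ) : Finset (Fin n) :=
  Finset.univ.filter
    (fun i => ∃ hi : (i : ℕ) + 1 < n, α i < α ⟨(i : ℕ) + 1, hi⟩ + μ ⟨(i : ℕ) + 1, hi⟩)

lemma badSet_nonempty {n : ℕ} {α μ : Fin n → ℕ} (h : ¬ IsGood α μ) :
    (badSet α μ).Nonempty := by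
  rw [IsGood] at h
  push_neg at h
  obtain ⟨i, hi, hlt⟩ := h
  exact ⟨i, Finset.mem_filter.mpr ⟨Finset.mem_univ _, ⟨hi, hlt⟩⟩⟩

def flipAt {n : ℕ} (α μ : Fin n → ℕ) (p q : Fin n) : Fin n → ℕ := fun j =>
  if j = p then α q + μ q - (α p + 1)
  else if j = q then α p + μ p + 1 - α q
  else μ j

noncomputable def pflip {n : ℕ} (α μ : Fin n → ℕ) : Fin n → ℕ :=
  if h : (badSet α μ).Nonempty then
    flipAt α μ ((badSet α μ).max' h)
      ⟨(((badSet α μ).max' h : Fin n) : ℕ) + 1,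
        ((Finset.mem_filter.mp ((badSet α μ).max'_mem h)).2).choose⟩
  else μ

lemma alternant_swap {n : ℕ} (τ : Fin n → ℕ) {p q : Fin n} (hpq : p ≠ q) :
    alternant (τ ∘ Equiv.swap p q) = - alternant τ := by
  have h : (Matrix.of fun i j : Fin n =>
        (MvPolynomial.X i : MvPolynomial (Fin n) ℤ) ^ (τ ∘ Equiv.swap p q) j)
      = (Matrix.of fun i j : Fin n =>
        (MvPolynomial.X i : MvPolynomial (Fin n) ℤ) ^ τ j).submatrix id (Equiv.swap p q) := rfl
  rw [alternant, h, Matrix.det_permute', Equiv.Perm.sign_swap hpq, alternant]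
  simp

lemma pflip_props {n : ℕ} (α : Fin n → ℕ) (hα : Antitone α) (μ : Fin n → ℕ)
    (h : ¬ IsGood α μ) :
    (∑ j, pflip α μ j = ∑ j, μ j) ∧
    (¬ IsGood α (pflip α μ)) ∧
    (pflip α (pflip α μ) = μ) ∧
    (alternant (fun j => α j + staircase n j + pflip α μ j)
      = - alternant (fun j => α j + staircase n j + μ j)) ∧
    (pflip α μ = μ → alternant (fun j => α j + staircase n j + μ j) = 0) := by
  classical
  have hne := badSet_nonempty h
  set i := (badSet α μ).max' hne with hidef
  have himem : i ∈ badSet α μ := Finset.max'_mem _ _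
  have hmax : ∀ j ∈ badSet α μ, j ≤ i := fun j hj => Finset.le_max' _ j hj
  obtain ⟨hi, hbad⟩ := (Finset.mem_filter.mp himem).2
  set i' : Fin n := ⟨(i : ℕ) + 1, hi⟩ with hi'def
  have hvi' : (i' : ℕ) = (i : ℕ) + 1 := rfl
  have hii' : i ≠ i' := by
    intro hcon
    have := congrArg Fin.val hcon
    omega
  have hle : α i' ≤ α i := hα (by rw [Fin.le_def]; omega)
  set ν := flipAt α μ i i' with hνdef
  have hflip : pflip α μ = ν := by
    rw [pflip, dif_pos hne]
  have hνi : ν i = α i' + μ i' - (α i + 1) := by simp [hνdef, flipAt]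
  have hνi' : ν i' = α i + μ i + 1 - α i' := by
    simp [hνdef, flipAt, hii'.symm]
  have hνother : ∀ j, j ≠ i → j ≠ i' → ν j = μ j := by
    intro j h1 h2; simp [hνdef, flipAt, h1, h2]
  have hkey : ∀ f : Fin n → ℕ,
      ∑ j, f j = f i + (f i' + ∑ j ∈ (Finset.univ.erase i).erase i', f j) := by
    intro f
    rw [Finset.add_sum_erase _ f
      (Finset.mem_erase.mpr ⟨hii'.symm, Finset.mem_univ i'⟩),
      Finset.add_sum_erase _ f (Finset.mem_univ i)]
  have hsum : ∑ j, ν j = ∑ j, μ j := by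
    rw [hkey ν, hkey μ, hνi, hνi']
    have hS : ∑ j ∈ (Finset.univ.erase i).erase i', ν j
        = ∑ j ∈ (Finset.univ.erase i).erase i', μ j := by
      refine Finset.sum_congr rfl fun j hj => ?_
      obtain ⟨hj2, hj1, _⟩ := Finset.mem_erase.mp hj |>.imp id (Finset.mem_erase.mp)
      exact hνother j hj1 hj2
    rw [hS]
    omega
  have hbadν : α i < α i' + ν i' := by omega
  have hnotgood : ¬ IsGood α ν := by
    intro hgood
    have := hgood i hi
    rw [show (⟨(i : ℕ) + 1, hi⟩ : Fin n) = i' from rfl] at this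
    omega
  have hiν : i ∈ badSet α ν :=
    Finset.mem_filter.mpr ⟨Finset.mem_univ _, ⟨hi, hbadν⟩⟩
  have hneν : (badSet α ν).Nonempty := ⟨i, hiν⟩
  have hmaxν : (badSet α ν).max' hneν = i := by
    refine le_antisymm (Finset.max'_le _ _ _ ?_) (Finset.le_max' _ i hiν)
    intro j hj
    by_contra hcon
    push_neg at hcon
    obtain ⟨hj1, hjbad⟩ := (Finset.mem_filter.mp hj).2
    have hji : (i : ℕ) < (j : ℕ) := hcon
    have hne1 : (⟨(j : ℕ) + 1, hj1⟩ : Fin n) ≠ i := by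
      intro hc; have := congrArg Fin.val hc; simp at this; omega
    have hne2 : (⟨(j : ℕ) + 1, hj1⟩ : Fin n) ≠ i' := by
      intro hc; have := congrArg Fin.val hc; simp [hvi'] at this; omega
    rw [hνother _ hne1 hne2] at hjbad
    have : j ≤ i := hmax j (Finset.mem_filter.mpr ⟨Finset.mem_univ _, ⟨hj1, hjbad⟩⟩)
    exact absurd this (by rw [Fin.le_def]; omega)
  have hflipν : pflip α ν = flipAt α ν i i' := by
    rw [pflip, dif_pos hneν]
    have hgen : ∀ (p : Fin n) (q : Fin n), p = i → (q : ℕ) = (i : ℕ) + 1 →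
        flipAt α ν p q = flipAt α ν i i' := by
      rintro p q rfl hq
      have : q = i' := Fin.ext (by rw [hq, hvi'])
      rw [this]
    exact hgen _ _ hmaxν (by simp [hmaxν])
  have hinv : pflip α (pflip α μ) = μ := by
    rw [hflip, hflipν]
    funext j
    simp only [flipAt]
    rcases eq_or_ne j i with rfl | h1
    · rw [if_pos rfl, hνi']
      omega
    · rw [if_neg h1]
      rcases eq_or_ne j i' with rfl | h2
      · rw [if_pos rfl, hνi]
        omega
      · rw [if_neg h2]
        exact hνother j h1 h2
  have hexp : (fun j => α j + staircase n j + ν j)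
      = (fun j => α j + staircase n j + μ j) ∘ (Equiv.swap i i') := by
    funext j
    simp only [Function.comp_apply]
    rcases eq_or_ne j i with rfl | h1
    · simp only [Equiv.swap_apply_left]
      rw [hνi]
      simp only [staircase, hvi']
      omega
    · rcases eq_or_ne j i' with rfl | h2
      · simp only [Equiv.swap_apply_right]
        rw [hνi']
        simp only [staircase, hvi']
        omega
      · simp only [Equiv.swap_apply_of_ne_of_ne h1 h2]
        rw [hνother j h1 h2]
  have hneg : alternant (fun j => α j + staircase n j + ν j)
      = - alternant (fun j => α j + staircase n j + μ j) := by
    rw [hexp]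
    exact alternant_swap _ hii'
  have hzero : pflip α μ = μ → alternant (fun j => α j + staircase n j + μ j) = 0 := by
    intro heq
    have hνμ : ν = μ := by rw [← hflip, heq]
    have h1 : μ i' = α i + μ i + 1 - α i' := by rw [← hνi', hνμ]
    have hγ : α i + staircase n i + μ i = α i' + staircase n i' + μ i' := by
      simp only [staircase, hvi']
      omega
    rw [alternant]
    refine Matrix.det_zero_of_column_eq hii' ?_
    intro p
    show (MvPolynomial.X p : MvPolynomial (Fin n) ℤ) ^ (α i + staircase n i + μ i)
      = (MvPolynomial.X p : MvPolynomial (Fin n) ℤ) ^ (α i' + staircase n i' + μ i')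
    rw [hγ]
  refine ⟨by rw [hflip]; exact hsum, by rw [hflip]; exact hnotgood,
    hinv, by rw [hflip]; exact hneg, hzero⟩

lemma bad_sum {n : ℕ} (α : Fin n → ℕ) (hα : Antitone α) (k : ℕ) :
    ∑ μ ∈ (Finset.Nat.antidiagonalTuple n k).filter (fun μ => ¬ IsGood α μ),
      alternant (fun j => α j + staircase n j + μ j) = 0 := by
  classical
  refine Finset.sum_involution (fun μ _ => pflip α μ) ?_ ?_ ?_ ?_
  · intro μ hμ
    obtain ⟨hT, hg⟩ := Finset.mem_filter.mp hμ
    obtain ⟨_, _, _, hneg, _⟩ := pflip_props α hα μ hg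
    rw [hneg]; ring
  · intro μ hμ hf0
    obtain ⟨hT, hg⟩ := Finset.mem_filter.mp hμ
    obtain ⟨_, _, _, _, hz⟩ := pflip_props α hα μ hg
    intro heq; exact hf0 (hz heq)
  · intro μ hμ
    obtain ⟨hT, hg⟩ := Finset.mem_filter.mp hμ
    obtain ⟨hsum, hng, _, _, _⟩ := pflip_props α hα μ hg
    refine Finset.mem_filter.mpr ⟨?_, hng⟩
    rw [Finset.Nat.mem_antidiagonalTuple] at hT ⊢
    rw [hsum, hT]
  · intro μ hμ
    obtain ⟨hT, hg⟩ := Finset.mem_filter.mp hμ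
    exact (pflip_props α hα μ hg).2.2.1

lemma good_sum {n : ℕ} (α : Fin n → ℕ) (k : ℕ) :
    ∑ μ ∈ (Finset.Nat.antidiagonalTuple n k).filter (fun μ => IsGood α μ),
      alternant (fun j => α j + staircase n j + μ j)
    = ∑ β ∈ (Fintype.piFinset fun i : Fin n => Finset.Icc (α i) (α i + k)).filter
          (fun β => Antitone β ∧ (∑ i, β i) = (∑ i, α i) + k ∧
            (∀ i : Fin n, α i ≤ β i) ∧
            (∀ (i : Fin n) (h : (i : ℕ) + 1 < n), β ⟨(i : ℕ) + 1, h⟩ ≤ α i)),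
        alternant (fun i => β i + staircase n i) := by
  classical
  refine Finset.sum_nbij' (fun μ => fun j => α j + μ j) (fun β => fun j => β j - α j)
    ?_ ?_ ?_ ?_ ?_
  · intro μ hμ
    beta_reduce
    obtain ⟨hT, hg⟩ := Finset.mem_filter.mp hμ
    rw [Finset.Nat.mem_antidiagonalTuple] at hT
    have hband : ∀ j, μ j ≤ k := fun j =>
      hT ▸ Finset.single_le_sum (f := μ) (fun _ _ => Nat.zero_le _) (Finset.mem_univ j)
    refine Finset.mem_filter.mpr ⟨?_, ?_, ?_, ?_, ?_⟩
    · rw [Fintype.mem_piFinset]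
      intro j
      rw [Finset.mem_Icc]
      exact ⟨Nat.le_add_right _ _, by have := hband j; omega⟩
    · refine antitone_of_adj ?_
      intro i hi
      have := hg i hi
      have h2 := Nat.le_add_right (α i) (μ i)
      omega
    · rw [Finset.sum_add_distrib, hT]
    · intro j; exact Nat.le_add_right _ _
    · intro i hi; beta_reduce; have := hg i hi; omega
  · intro β hβ
    beta_reduce
    obtain ⟨hp, hanti, hsum, hge, hstrip⟩ := Finset.mem_filter.mp hβ
    refine Finset.mem_filter.mpr ⟨?_, ?_⟩
    · rw [Finset.Nat.mem_antidiagonalTuple]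
      have h2 : ∑ j, β j = ∑ j, (α j + (β j - α j)) :=
        Finset.sum_congr rfl (fun j _ => by have := hge j; omega)
      rw [Finset.sum_add_distrib] at h2
      omega
    · intro i hi
      beta_reduce
      have h1 := hstrip i hi
      have h2 := hge ⟨(i : ℕ) + 1, hi⟩
      omega
  · intro μ hμ; beta_reduce; funext j; omega
  · intro β hβ
    beta_reduce
    obtain ⟨hp, hanti, hsum, hge, hstrip⟩ := Finset.mem_filter.mp hβ
    funext j
    have := hge j
    omega
  · intro μ hμ
    beta_reduce
    congr 1
    funext j
    omega

/-- Pieri formula, complete case: for a partition `α` with at most `n` parts and `k ≥ 1`,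
`a_{α+δ} · h_k = ∑_β a_{β+δ}`, the sum over all partitions `β` with at most `n` parts such
that `|β| = |α| + k`, `α_i ≤ β_i`, and `β_{i+1} ≤ α_i` for every `i` (`β` is obtained from
`α` by adding `k` boxes, at most one per column). -/
theorem pieri_complete {n : ℕ} (α : Fin n → ℕ) (hα : Antitone α) (k : ℕ) (hk1 : 1 ≤ k) :
    alternant (fun i => α i + staircase n i) * MvPolynomial.hsymm (Fin n) ℤ k =
      ∑ β ∈ (Fintype.piFinset fun i : Fin n => Finset.Icc (α i) (α i + k)).filter
          (fun β => Antitone β ∧ (∑ i, β i) = (∑ i, α i) + k ∧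
            (∀ i : Fin n, α i ≤ β i) ∧
            (∀ (i : Fin n) (h : (i : ℕ) + 1 < n), β ⟨(i : ℕ) + 1, h⟩ ≤ α i)),
        alternant (fun i => β i + staircase n i) := by
  classical
  rw [alternant_mul_hsymm]
  have hsplit := Finset.sum_filter_add_sum_filter_not (Finset.Nat.antidiagonalTuple n k)
    (fun μ => IsGood α μ) (fun μ => alternant (fun j => α j + staircase n j + μ j))
  calc ∑ μ ∈ Finset.Nat.antidiagonalTuple n k,
        alternant (fun j => (fun i => α i + staircase n i) j + μ j)
      = ∑ μ ∈ (Finset.Nat.antidiagonalTuple n k).filter (fun μ => IsGood α μ),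
          alternant (fun j => α j + staircase n j + μ j)
        + ∑ μ ∈ (Finset.Nat.antidiagonalTuple n k).filter (fun μ => ¬ IsGood α μ),
          alternant (fun j => α j + staircase n j + μ j) := hsplit.symm
    _ = _ := by rw [bad_sum α hα k, add_zero, good_sum]
end
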